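/- arXiv:0905.0455 — 2 statements merged into one kernel-verified Lean document; each statement's English description precedes it below -/
import Mathlib

section
/- For every u ∈ H^1(Ω) and every i ∈ {1,2,3}, ‖G_ε^i(u) − u‖_{L²(Ω)} ≤ ε ‖∂u/∂x_i‖_{L²(Ω)}. -/
open MeasureTheory Filter Topology Function

noncomputable section

/-- The ambient space ℝ³ (with the Lebesgue product measure). -/
abbrev E3 := Fin 3 → ℝ

/-- The cube Ω = I³, I = (−1/2, 1/2). -/
def Omg : Set E3 := {x | ∀ i, x i ∈ Set.Ioo (-(1/2) : ℝ) (1/2)}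

/-- ε = 1/(2n+1). -/
def eps (n : ℕ) : ℝ := 1 / (2 * (n : ℝ) + 1)

/-- The layer set of half-thickness `r` orthogonal to direction `i`:
`T^i_ε = {x ∈ Ω : ∃ k ∈ Z_ε, |x_i − εk| < r}` (the same formula also defines
the control zones `C^i_ε` when `r` is replaced by `R`). -/
def layer (n : ℕ) (r : ℝ) (i : Fin 3) : Set E3 :=
  {x | x ∈ Omg ∧ ∃ k : ℤ, |k| ≤ (n : ℤ) ∧ |x i - eps n * (k : ℝ)| < r}

/-- `T_ε = ∪_{i=1}^{3} T^i_ε`. -/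
def Tset (n : ℕ) (r : Fin 3 → ℝ) : Set E3 := ⋃ i, layer n (r i) i

/-- The control zone `C_ε = ∪_{i=1}^{3} C^i_ε`. -/
def Cset (n : ℕ) (R : Fin 3 → ℝ) : Set E3 := ⋃ i, layer n (R i) i

/-- `H¹(Ω)` (Beppo Levi description): an `L²(Ω)` function together with its weak
gradient in `L²(Ω)³`; the representative is normalized so that the fundamental
theorem of calculus holds on almost every line parallel to the axes
(absolute continuity on lines), which in particular fixes its traces on
hyperplanes. -/
structure H1 where
  u : E3 → ℝ
  grad : E3 → E3
  mem_u : MemLp u 2 (volume.restrict Omg)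
  mem_grad : MemLp grad 2 (volume.restrict Omg)
  line : ∀ i : Fin 3, ∀ᵐ x ∂(volume.restrict Omg), ∀ s t : ℝ,
    update x i s ∈ Omg → update x i t ∈ Omg →
      u (update x i t) - u (update x i s) = ∫ τ in s..t, grad (update x i τ) i

/-- `H¹₀(Ω)`: as `H¹(Ω)`, together with the zero-trace condition, expressed by
the fact that integration by parts holds against *all* test functions of ℝ³
(equivalently, the extension of `u` by zero belongs to `H¹(ℝ³)`). -/
structure H10 where
  u : E3 → ℝ
  grad : E3 → E3
  mem_u : MemLp u 2 (volume.restrict Omg)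
  mem_grad : MemLp grad 2 (volume.restrict Omg)
  line : ∀ i : Fin 3, ∀ᵐ x ∂(volume.restrict Omg), ∀ s t : ℝ,
    update x i s ∈ Omg → update x i t ∈ Omg →
      u (update x i t) - u (update x i s) = ∫ τ in s..t, grad (update x i τ) i
  weak : ∀ φ : E3 → ℝ, ContDiff ℝ (⊤ : ℕ∞) φ → HasCompactSupport φ → ∀ i : Fin 3,
    (∫ x in Omg, u x * fderiv ℝ φ x (Pi.single i 1)) = - ∫ x in Omg, grad x i * φ x

/-- `H^{-1}(Ω)`, represented (as is always possible) in the form `f = f₀ − div g`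
with `f₀ ∈ L²(Ω)` and `g ∈ L²(Ω)³`. -/
structure Hm1 where
  f0 : E3 → ℝ
  g : E3 → E3
  mem_f0 : MemLp f0 2 (volume.restrict Omg)
  mem_g : MemLp g 2 (volume.restrict Omg)

/-- The duality pairing `⟨f, v⟩ = ∫_Ω f₀ v + ∫_Ω g·∇v` evaluated on a raw
function `v` with gradient `dv`. -/
def Hm1.pairFun (f : Hm1) (v : E3 → ℝ) (dv : E3 → E3) : ℝ :=
  (∫ x in Omg, f.f0 x * v x) + ∫ x in Omg, ∑ j, f.g x j * dv x j

/-- The duality pairing between `H^{-1}(Ω)` and `H¹₀(Ω)`. -/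
def Hm1.pair (f : Hm1) (v : H10) : ℝ := f.pairFun v.u v.grad

/-- The `H¹₀(Ω)` norm. -/
def H10.norm2 (v : H10) : ℝ :=
  Real.sqrt ((∫ x in Omg, (v.u x)^2) + ∫ x in Omg, ∑ j, (v.grad x j)^2)

/-- The `H¹₀(Ω)` scalar product. -/
def H10.inn (u v : H10) : ℝ :=
  (∫ x in Omg, u.u x * v.u x) + ∫ x in Omg, ∑ j, u.grad x j * v.grad x j

/-- Weak convergence in `H¹₀(Ω)`. -/
def WeakH10 (U : ℕ → H10) (u : H10) : Prop :=
  ∀ v : H10, Tendsto (fun n => (U n).inn v) atTop (𝓝 (u.inn v))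

/-- Boundedness in `H^{-1}(Ω)`: a uniform bound as functionals on `H¹₀(Ω)`. -/
def BddHm1 (f : ℕ → Hm1) : Prop :=
  ∃ C : ℝ, ∀ n, ∀ v : H10, |(f n).pair v| ≤ C * v.norm2

/-- The variational problem (7):
`a ∫_{Ω∖T_ε} ∇u·∇v + (b/|T_ε|) ∫_{T_ε} ∇u·∇v = ⟨f_ε, v⟩` for all `v ∈ H¹₀(Ω)`. -/
def IsSol (n : ℕ) (r : Fin 3 → ℝ) (a b : ℝ) (f : Hm1) (u : H10) : Prop :=
  ∀ v : H10,
    a * (∫ x in Omg \ Tset n r, ∑ j, u.grad x j * v.grad x j)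
      + (b / (volume (Tset n r)).toReal) * (∫ x in Tset n r, ∑ j, u.grad x j * v.grad x j)
      = f.pair v

/-- The center `εk`, `k = round(t/ε)`, of the ε-cell containing `t`. -/
def cen (n : ℕ) (t : ℝ) : ℝ := eps n * (round (t / eps n) : ℝ)

/-- The distance from `t` to the nearest cell center `εk`. -/
def distLat (n : ℕ) (t : ℝ) : ℝ := |t - cen n t|

/-- The averaging operator `G^i_ε` of (11)–(12): the mean of the two traces of
`u` on the faces `x_i = εk ± r` of the layer, for `x_i` in the cell `I^k_ε`. -/
def Gop (n : ℕ) (r : ℝ) (i : Fin 3) (u : E3 → ℝ) (x : E3) : ℝ :=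
  (u (update x i (cen n (x i) - r)) + u (update x i (cen n (x i) + r))) / 2

/-- The capacitary function `w^i_ε` of (30). -/
def wfun (n : ℕ) (r R : ℝ) (i : Fin 3) (x : E3) : ℝ :=
  max 0 (1 - max r (distLat n (x i)) / R)

/-- The (a.e.) gradient of the capacitary function `w^i_ε`. -/
def wgrad (n : ℕ) (r R : ℝ) (i : Fin 3) (x : E3) : E3 := fun j =>
  if j = i ∧ r < distLat n (x i) ∧ distLat n (x i) < R then
    - Real.sign (x i - cen n (x i)) / R
  else 0

/-- The step approximation `φ^i_ε` of (31). -/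
def stepApprox (n : ℕ) (R : ℝ) (i : Fin 3) (φ : E3 → ℝ) (x : E3) : ℝ :=
  if distLat n (x i) < R then φ (update x i (cen n (x i))) else 0

/-- The (tangential, a.e.) gradient `∇φ^i_ε` of the step approximation. -/
def stepGrad (n : ℕ) (R : ℝ) (i : Fin 3) (φ : E3 → ℝ) (x : E3) : E3 := fun j =>
  if j ≠ i ∧ distLat n (x i) < R then
    fderiv ℝ φ (update x i (cen n (x i))) (Pi.single j 1)
  else 0

/-- `φ ∈ D(Ω)`: smooth and compactly supported inside Ω. -/
def TestFun (φ : E3 → ℝ) : Prop :=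
  ContDiff ℝ (⊤ : ℕ∞) φ ∧ HasCompactSupport φ ∧ tsupport φ ⊆ Omg

/-- `‖∇φ‖_{L^∞}` (Euclidean length of the gradient, sup norm). -/
def gradSup (φ : E3 → ℝ) : ℝ :=
  ⨆ x : E3, Real.sqrt (∑ j, (fderiv ℝ φ x (Pi.single j 1))^2)

/-- `∇φ` as a vector field. -/
def dphi (φ : E3 → ℝ) (x : E3) : E3 := fun j => fderiv ℝ φ x (Pi.single j 1)

/-- The control-zone test function `v_ε(φ)` of (36). -/
def vfun (n : ℕ) (r R : Fin 3 → ℝ) (φ : E3 → ℝ) (x : E3) : ℝ :=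
  ∑ i, ((1 - r i / R i) * φ x + (stepApprox n (R i) i φ x - φ x) * wfun n (r i) (R i) i x)

/-- The (a.e.) gradient of the control-zone test function `v_ε(φ)`. -/
def vgrad (n : ℕ) (r R : Fin 3 → ℝ) (φ : E3 → ℝ) (x : E3) : E3 := fun j =>
  ∑ i, ((1 - r i / R i) * dphi φ x j
    + (stepGrad n (R i) i φ x j - dphi φ x j) * wfun n (r i) (R i) i x
    + (stepApprox n (R i) i φ x - φ x) * wgrad n (r i) (R i) i x j)

/-- The gridwork set `T_ε = T¹_ε ∪ T²_ε` (no horizontal layers). -/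
def Tg (n : ℕ) (r : Fin 3 → ℝ) : Set E3 := layer n (r 0) 0 ∪ layer n (r 1) 1

/-- The variational problem (7) in the gridwork geometry. -/
def IsSolG (n : ℕ) (r : Fin 3 → ℝ) (a b : ℝ) (f : Hm1) (u : H10) : Prop :=
  ∀ v : H10,
    a * (∫ x in Omg \ Tg n r, ∑ j, u.grad x j * v.grad x j)
      + (b / (volume (Tg n r)).toReal) * (∫ x in Tg n r, ∑ j, u.grad x j * v.grad x j)
      = f.pair v

namespace St4

open Set
open scoped ENNReal NNReal

abbrev Y2 := Fin 2 → ℝ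

/-- interval I -/
def Iset : Set ℝ := Set.Ioo (-(1/2) : ℝ) (1/2)

def Qset : Set Y2 := {y | ∀ j, y j ∈ Iset}

lemma eps_pos (n : ℕ) : 0 < eps n := by
  have h : (0:ℝ) < 2 * (n:ℝ) + 1 := by positivity
  exact div_pos one_pos h

lemma measurableSet_Omg : MeasurableSet Omg := by
  have : Omg = ⋂ j : Fin 3, (fun x : E3 => x j) ⁻¹' (Set.Ioo (-(1/2) : ℝ) (1/2)) := by
    ext x; simp [Omg, Set.mem_iInter]
  rw [this]
  exact MeasurableSet.iInter fun j => (measurable_pi_apply j) measurableSet_Ioo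

lemma measurableSet_Qset : MeasurableSet Qset := by
  have : Qset = ⋂ j : Fin 2, (fun y : Y2 => y j) ⁻¹' Iset := by
    ext y; simp [Qset, Set.mem_iInter]
  rw [this]
  exact MeasurableSet.iInter fun j => (measurable_pi_apply j) measurableSet_Ioo

lemma cen_le (n : ℕ) (t : ℝ) : cen n t ≤ t + eps n / 2 := by
  have hε := eps_pos n
  have h := round_le_add_half (t / eps n)
  have h2 := mul_le_mul_of_nonneg_left h hε.le
  have h3 : eps n * (t / eps n + 1 / 2) = t + eps n / 2 := by
    field_simp
  calc cen n t = eps n * (round (t / eps n) : ℝ) := rfl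
    _ ≤ eps n * (t / eps n + 1 / 2) := h2
    _ = t + eps n / 2 := h3

lemma lt_cen (n : ℕ) (t : ℝ) : t - eps n / 2 < cen n t := by
  have hε := eps_pos n
  have h := sub_half_lt_round (t / eps n)
  have h2 := mul_lt_mul_of_pos_left h hε
  have h3 : eps n * (t / eps n - 1 / 2) = t - eps n / 2 := by
    field_simp
  calc t - eps n / 2 = eps n * (t / eps n - 1 / 2) := h3.symm
    _ < eps n * (round (t / eps n) : ℝ) := h2
    _ = cen n t := rfl

lemma mem_cell (n : ℕ) (t : ℝ) :
    t ∈ Set.Ico (cen n t - eps n / 2) (cen n t + eps n / 2) :=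
  ⟨by linarith [cen_le n t], by linarith [lt_cen n t]⟩

def cellIco (n : ℕ) (k : ℤ) : Set ℝ := Set.Ico (eps n * k - eps n / 2) (eps n * k + eps n / 2)

def cellIcc (n : ℕ) (k : ℤ) : Set ℝ := Set.Icc (eps n * k - eps n / 2) (eps n * k + eps n / 2)

lemma mem_cellIco_round (n : ℕ) (t : ℝ) : t ∈ cellIco n (round (t / eps n)) := mem_cell n t

lemma cen_eq' (n : ℕ) (k : ℤ) {t : ℝ} (h : t ∈ cellIco n k) : cen n t = eps n * k := by
  have hε := eps_pos n
  have hr : round (t / eps n) = k := by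
    rw [round_eq]
    rw [Int.floor_eq_iff]
    constructor
    · have h5 : ((k:ℝ) - 1/2) * eps n ≤ t := by nlinarith [h.1]
      have h6 := (le_div_iff₀ hε).mpr h5
      linarith
    · have : t / eps n < (k : ℝ) + 1 / 2 := by
        rw [div_lt_iff₀ hε]
        nlinarith [h.2]
      linarith
  show eps n * (round (t / eps n) : ℝ) = eps n * k
  rw [hr]

lemma cellIco_disjoint (n : ℕ) : Pairwise (Function.onFun Disjoint (cellIco n)) := by
  intro k k' hne
  rw [Function.onFun]
  rw [Set.disjoint_left]
  intro t h1 h2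
  have e1 := cen_eq' n k h1
  have e2 := cen_eq' n k' h2
  apply hne
  have : (k : ℝ) = k' := mul_left_cancel₀ (eps_pos n).ne' (e1.symm.trans e2)
  exact_mod_cast this

lemma iUnion_cellIco (n : ℕ) : (⋃ k : ℤ, cellIco n k) = Set.univ := by
  ext t
  simp only [Set.mem_iUnion, Set.mem_univ, iff_true]
  exact ⟨round (t / eps n), mem_cellIco_round n t⟩

lemma cen_bounds (n : ℕ) {t : ℝ} (ht : t ∈ Iset) :
    -(1/2 : ℝ) ≤ cen n t - eps n / 2 ∧ cen n t + eps n / 2 ≤ 1/2 := by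
  have hε := eps_pos n
  obtain ⟨ht1, ht2⟩ := ht
  have hkey : eps n * (n : ℝ) + eps n / 2 = 1 / 2 := by
    have : (2 * (n:ℝ) + 1) ≠ 0 := by positivity
    have he : eps n * (2 * (n:ℝ) + 1) = 1 := by unfold eps; exact one_div_mul_cancel this
    linear_combination (1/2 : ℝ) * he
  -- upper bound on round
  have hub : (round (t / eps n) : ℝ) ≤ (n : ℝ) := by
    have h1 : (round (t / eps n) : ℝ) ≤ t / eps n + 1/2 := round_le_add_half _
    have h2 : t / eps n < (n : ℝ) + 1/2 := by
      rw [div_lt_iff₀ hε]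
      nlinarith
    have h3 : (round (t / eps n) : ℝ) < (n : ℝ) + 1 := by linarith
    have h4 : round (t / eps n) < (n : ℤ) + 1 := by exact_mod_cast h3
    have h5 : round (t / eps n) ≤ (n : ℤ) := by omega
    exact_mod_cast h5
  have hlb : -(n : ℝ) ≤ (round (t / eps n) : ℝ) := by
    have h1 : t / eps n - 1/2 < (round (t / eps n) : ℝ) := sub_half_lt_round _
    have h2 : -((n : ℝ) + 1/2) < t / eps n := by
      rw [lt_div_iff₀ hε]
      nlinarith
    have h3 : -((n : ℝ) + 1) < (round (t / eps n) : ℝ) := by linarith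
    have h4 : -((n : ℤ) + 1) < round (t / eps n) := by exact_mod_cast h3
    have h5 : -(n : ℤ) ≤ round (t / eps n) := by omega
    exact_mod_cast h5
  have hc1 : cen n t ≤ eps n * (n : ℝ) := by
    have := mul_le_mul_of_nonneg_left hub hε.le
    exact this
  have hc2 : -(eps n * (n : ℝ)) ≤ cen n t := by
    have := mul_le_mul_of_nonneg_left hlb hε.le
    calc -(eps n * (n:ℝ)) = eps n * (-(n:ℝ)) := by ring
      _ ≤ eps n * (round (t / eps n) : ℝ) := this
      _ = cen n t := rfl
  constructor
  · linarith
  · linarith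

/-- Cauchy–Schwarz for a finite measure. -/
lemma cs_sq {μ : MeasureTheory.Measure ℝ} [MeasureTheory.IsFiniteMeasure μ] {f : ℝ → ℝ}
    (hm : MeasureTheory.AEStronglyMeasurable f μ)
    (hi : MeasureTheory.Integrable (fun t => f t ^ 2) μ) :
    (∫ t, |f t| ∂μ) ^ 2 ≤ (μ Set.univ).toReal * ∫ t, f t ^ 2 ∂μ := by
  set M := (μ Set.univ).toReal with hMdef
  set S := ∫ t, f t ^ 2 ∂μ with hSdef
  set L := ∫ t, |f t| ∂μ with hLdef
  have hM0 : 0 ≤ M := ENNReal.toReal_nonneg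
  have hS0 : 0 ≤ S := MeasureTheory.integral_nonneg fun t => sq_nonneg _
  have hL0 : 0 ≤ L := MeasureTheory.integral_nonneg fun t => abs_nonneg _
  have habs : MeasureTheory.Integrable (fun t => |f t|) μ := by
    have hmabs : MeasureTheory.AEStronglyMeasurable (fun t => |f t|) μ := by
      simpa [Real.norm_eq_abs] using hm.norm
    refine MeasureTheory.Integrable.mono' (((MeasureTheory.integrable_const (1:ℝ)).add hi).div_const 2) hmabs ?_
    filter_upwards with t
    simp only [Pi.add_apply]
    rw [Real.norm_eq_abs, abs_abs]
    nlinarith [sq_nonneg (|f t| - 1), sq_abs (f t)]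
  have hkey : ∀ a : ℝ, 0 < a → 2 * a * L ≤ a ^ 2 * M + S := by
    intro a ha
    have hpt : ∀ t, |f t| ≤ a / 2 + f t ^ 2 / (2 * a) := by
      intro t
      have h2 : |f t| * (2 * a) ≤ a * a + f t ^ 2 := by
        nlinarith [sq_nonneg (|f t| - a), sq_abs (f t)]
      have expand : a / 2 + f t ^ 2 / (2 * a) - |f t| = (a * a + f t ^ 2 - |f t| * (2 * a)) / (2 * a) := by
        field_simp
      have hnum : 0 ≤ (a * a + f t ^ 2 - |f t| * (2 * a)) / (2 * a) := by
        apply div_nonneg (by linarith) (by positivity)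
      linarith [expand ▸ hnum]
    have hInt2 : MeasureTheory.Integrable (fun t => a / 2 + f t ^ 2 / (2 * a)) μ :=
      (MeasureTheory.integrable_const (a / 2)).add (hi.div_const (2 * a))
    have hle : L ≤ ∫ t, (a / 2 + f t ^ 2 / (2 * a)) ∂μ :=
      MeasureTheory.integral_mono habs hInt2 hpt
    have heval : ∫ t, (a / 2 + f t ^ 2 / (2 * a)) ∂μ = a / 2 * M + S / (2 * a) := by
      rw [MeasureTheory.integral_add (MeasureTheory.integrable_const _) (hi.div_const _)]
      rw [MeasureTheory.integral_const]
      rw [MeasureTheory.integral_div]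
      rw [smul_eq_mul]
      simp only [hMdef, hSdef, Measure.real]
      ring
    rw [heval] at hle
    have := mul_le_mul_of_nonneg_left hle (by positivity : (0:ℝ) ≤ 2 * a)
    calc 2 * a * L ≤ 2 * a * (a / 2 * M + S / (2 * a)) := this
      _ = a ^ 2 * M + S := by field_simp
  by_contra hcon
  push_neg at hcon
  have hL : 0 < L := by nlinarith
  by_cases hMz : M = 0
  · have h := hkey ((S + 1) / L) (by positivity)
    rw [hMz] at h
    have : 2 * ((S + 1) / L) * L = 2 * (S + 1) := by field_simp
    nlinarith
  · have hM : 0 < M := lt_of_le_of_ne hM0 (Ne.symm hMz)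
    set b := L / M with hbdef
    have hb : b * M = L := div_mul_cancel₀ _ hM.ne'
    have hbpos : 0 < b := div_pos hL hM
    have h := hkey b hbpos
    have h1 : b ^ 2 * M = b * L := by
      rw [pow_two, mul_assoc, hb]
    rw [h1] at h
    have h2 : b * L ≤ S := by linarith
    have h3 : L ^ 2 = M * (b * L) := by
      rw [← hb]; ring
    have h4 : M * (b * L) ≤ M * S := mul_le_mul_of_nonneg_left h2 hM0
    nlinarith

/-! ### Transport through the equivalence `E3 ≃ ℝ × Y2` -/

def eqv (i : Fin 3) : E3 ≃ᵐ ℝ × Y2 :=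
  MeasurableEquiv.piFinSuccAbove (fun _ : Fin 3 => ℝ) i

lemma eqv_apply (i : Fin 3) (x : E3) : eqv i x = (x i, i.removeNth x) := rfl

lemma eqv_symm_apply (i : Fin 3) (p : ℝ × Y2) : (eqv i).symm p = i.insertNth p.1 p.2 := rfl

lemma hmp (i : Fin 3) : MeasurePreserving (eqv i) (volume : Measure E3) volume :=
  volume_preserving_piFinSuccAbove (fun _ : Fin 3 => ℝ) i

lemma update_eq_insertNth (i : Fin 3) (x : E3) (τ : ℝ) :
    Function.update x i τ = i.insertNth τ (i.removeNth x) :=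
  (Fin.insertNth_removeNth i τ x).symm

lemma mem_Omg_iff (i : Fin 3) (x : E3) :
    x ∈ Omg ↔ x i ∈ Iset ∧ i.removeNth x ∈ Qset := by
  constructor
  · intro h
    exact ⟨h i, fun j => h (i.succAbove j)⟩
  · rintro ⟨h1, h2⟩
    rw [show Omg = {x : E3 | ∀ j, x j ∈ Iset} from rfl]
    intro j
    rcases (Fin.forall_iff_succAbove i (P := fun j => x j ∈ Iset)).mpr ⟨h1, h2⟩ j with h
    exact h

lemma update_mem_Omg {i : Fin 3} {x : E3} (hx : x ∈ Omg) {τ : ℝ} (hτ : τ ∈ Iset) :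
    Function.update x i τ ∈ Omg := by
  intro j
  by_cases hj : j = i
  · subst hj; rw [Function.update_self]; exact hτ
  · rw [Function.update_of_ne hj]; exact hx j

/-- pull back an a.e. property of `Y2` through `removeNth`. -/
lemma ae_comp_removeNth {Q : Y2 → Prop} (i : Fin 3)
    (hQ : ∀ᵐ y ∂(volume : Measure Y2), Q y) :
    ∀ᵐ x ∂(volume : Measure E3), Q (i.removeNth x) := by
  rw [MeasureTheory.ae_iff] at hQ ⊢
  set N := {y : Y2 | ¬ Q y} with hN
  have hsub : {x : E3 | ¬ Q (i.removeNth x)} ⊆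
      (eqv i) ⁻¹' (Set.univ ×ˢ toMeasurable volume N) := by
    intro x hx
    rw [Set.mem_preimage, eqv_apply, Set.mem_prod]
    exact ⟨trivial, subset_toMeasurable _ _ hx⟩
  refine measure_mono_null hsub ?_
  rw [(hmp i).measure_preimage
    ((MeasurableSet.univ.prod (measurableSet_toMeasurable _ _)).nullMeasurableSet)]
  rw [Measure.volume_eq_prod, Measure.prod_prod, measure_toMeasurable, hQ, mul_zero]

/-- slicing an a.e. property along lines in direction `i`. -/
lemma ae_update {P : E3 → Prop} (i : Fin 3)
    (hP : ∀ᵐ x ∂(volume : Measure E3), P x) :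
    ∀ᵐ x ∂(volume : Measure E3), ∀ᵐ τ ∂(volume : Measure ℝ), P (Function.update x i τ) := by
  set N := toMeasurable volume {x : E3 | ¬ P x} with hNdef
  have hNmeas : MeasurableSet N := measurableSet_toMeasurable _ _
  have hN0 : volume N = 0 := by
    rw [hNdef, measure_toMeasurable]
    exact hP
  have h2 : ((volume : Measure ℝ).prod (volume : Measure Y2)) ((eqv i).symm ⁻¹' N) = 0 := by
    have := (MeasurePreserving.symm (eqv i) (hmp i)).measure_preimage hNmeas.nullMeasurableSet
    rw [← Measure.volume_eq_prod]
    rw [this, hN0]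
  have h1 : ∀ᵐ z ∂((volume : Measure Y2).prod (volume : Measure ℝ)),
      (eqv i).symm (z.2, z.1) ∉ N := by
    rw [MeasureTheory.ae_iff]
    have hset : {z : Y2 × ℝ | ¬ (eqv i).symm (z.2, z.1) ∉ N} =
        Prod.swap ⁻¹' ((eqv i).symm ⁻¹' N) := by
      ext z
      simp [Prod.swap]
    rw [hset]
    rw [(Measure.measurePreserving_swap (μ := (volume : Measure Y2))
        (ν := (volume : Measure ℝ))).measure_preimage
      (((eqv i).symm.measurable hNmeas).nullMeasurableSet)]
    exact h2
  have h3 := Measure.ae_ae_of_ae_prod h1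
  have h4 := ae_comp_removeNth (Q := fun y => ∀ᵐ τ ∂(volume : Measure ℝ),
    (eqv i).symm (τ, y) ∉ N) i h3
  filter_upwards [h4] with x hx
  filter_upwards [hx] with τ hτ
  rw [eqv_symm_apply] at hτ
  rw [update_eq_insertNth i x τ]
  by_contra hc
  exact hτ (subset_toMeasurable _ _ hc)

lemma ae_update_lintegral_fin (i : Fin 3) (w : E3 → ℝ≥0∞) (hw : Measurable w)
    (hfin : (∫⁻ x, w x ∂(volume : Measure E3)) ≠ ⊤) :
    ∀ᵐ x ∂(volume : Measure E3), (∫⁻ τ, w (Function.update x i τ) ∂(volume : Measure ℝ)) ≠ ⊤ := by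
  have h0 : ∫⁻ z, w ((eqv i).symm z) ∂(volume : Measure (ℝ × Y2)) = ∫⁻ x, w x :=
    (MeasurePreserving.symm (eqv i) (hmp i)).lintegral_comp_emb (eqv i).symm.measurableEmbedding w
  have hwm : Measurable fun z : ℝ × Y2 => w ((eqv i).symm z) := hw.comp (eqv i).symm.measurable
  have h1 : (∫⁻ y, (∫⁻ τ, w ((eqv i).symm (τ, y)) ∂(volume : Measure ℝ)) ∂(volume : Measure Y2)) ≠ ⊤ := by
    rw [← lintegral_prod_symm _ hwm.aemeasurable, ← Measure.volume_eq_prod, h0]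
    exact hfin
  have hmeas : Measurable fun y : Y2 => ∫⁻ τ, w ((eqv i).symm (τ, y)) ∂(volume : Measure ℝ) :=
    Measurable.lintegral_prod_left hwm
  have h2 := MeasureTheory.ae_lt_top hmeas h1
  have h3 := ae_comp_removeNth (Q := fun y =>
    (∫⁻ τ, w ((eqv i).symm (τ, y)) ∂(volume : Measure ℝ)) < ⊤) i h2
  filter_upwards [h3] with x hx
  have : ∀ τ : ℝ, w ((eqv i).symm (τ, i.removeNth x)) = w (Function.update x i τ) := by
    intro τ
    rw [eqv_symm_apply, ← update_eq_insertNth]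
  rw [show (fun τ => w (Function.update x i τ)) = fun τ => w ((eqv i).symm (τ, i.removeNth x)) by
    funext τ; rw [this τ]]
  exact hx.ne

/-! ### The Fubini/covering estimate -/

/-- the local cell-average of `g0²` along direction `i`. -/
def Hl (n : ℕ) (i : Fin 3) (g0 : E3 → ℝ) (x : E3) : ℝ≥0∞ :=
  ∫⁻ τ in Set.Icc (cen n (x i) - eps n / 2) (cen n (x i) + eps n / 2),
    ENNReal.ofReal (g0 (Function.update x i τ) ^ 2)

lemma volume_cellIcc (n : ℕ) (k : ℤ) : volume (cellIcc n k) = ENNReal.ofReal (eps n) := by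
  rw [cellIcc, Real.volume_Icc]
  congr 1
  ring

lemma volume_cellIco (n : ℕ) (k : ℤ) : volume (cellIco n k) = ENNReal.ofReal (eps n) := by
  rw [cellIco, Real.volume_Ico]
  congr 1
  ring

lemma tonelli_bound (n : ℕ) (i : Fin 3) (g0 : E3 → ℝ) (hg0 : Measurable g0) :
    (∫⁻ x in Omg, Hl n i g0 x ∂(volume : Measure E3))
      ≤ ENNReal.ofReal (eps n) * ∫⁻ x, ENNReal.ofReal (g0 x ^ 2) ∂(volume : Measure E3) := by
  set q : ℝ × Y2 → ℝ≥0∞ := fun z => ENNReal.ofReal (g0 ((eqv i).symm z) ^ 2) with hq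
  have hqm : Measurable q := by
    apply Measurable.ennreal_ofReal
    exact (hg0.comp (eqv i).symm.measurable).pow_const 2
  set Sk : ℤ → Set E3 := fun k => {x : E3 | x i ∈ cellIco n k} with hSk
  have hSkmeas : ∀ k, MeasurableSet (Sk k) :=
    fun k => measurable_pi_apply i measurableSet_Ico
  set Fk : ℤ → Y2 → ℝ≥0∞ := fun k y => ∫⁻ τ in cellIcc n k, q (τ, y) with hFk
  have hFkm : ∀ k, Measurable (Fk k) := by
    intro k
    exact Measurable.lintegral_prod_left hqm
  -- step 1 : cover
  have hcover : Omg ⊆ ⋃ k : ℤ, (Omg ∩ Sk k) := by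
    intro x hx
    exact Set.mem_iUnion.2 ⟨round (x i / eps n), hx, mem_cellIco_round n (x i)⟩
  have step1 : (∫⁻ x in Omg, Hl n i g0 x) ≤ ∑' k : ℤ, ∫⁻ x in Omg ∩ Sk k, Hl n i g0 x :=
    (lintegral_mono_set hcover).trans (lintegral_iUnion_le _ _)
  -- step 2 : on each piece the integrand only depends on the transverse variable
  have step2 : ∀ k : ℤ, (∫⁻ x in Omg ∩ Sk k, Hl n i g0 x)
      = ∫⁻ x in Omg ∩ Sk k, Fk k (i.removeNth x) := by
    intro k
    apply setLIntegral_congr_fun (measurableSet_Omg.inter (hSkmeas k))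
    intro x hx
    have hcen : cen n (x i) = eps n * k := cen_eq' n k hx.2
    rw [Hl, hcen]
    rw [hFk]
    apply lintegral_congr
    intro τ
    rw [hq]
    congr 2
    rw [eqv_symm_apply, ← update_eq_insertNth]
  -- step 3 : the piece is a product set
  have step3 : ∀ k : ℤ, Omg ∩ Sk k = (eqv i) ⁻¹' ((Iset ∩ cellIco n k) ×ˢ Qset) := by
    intro k
    ext x
    rw [Set.mem_inter_iff, Set.mem_preimage, eqv_apply, Set.mem_prod, mem_Omg_iff i x]
    constructor
    · rintro ⟨⟨h1, h2⟩, h3⟩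
      exact ⟨⟨h1, h3⟩, h2⟩
    · rintro ⟨⟨h1, h3⟩, h2⟩
      exact ⟨⟨h1, h2⟩, h3⟩
  have step4 : ∀ k : ℤ, (∫⁻ x in Omg ∩ Sk k, Fk k (i.removeNth x))
      = ∫⁻ z in (Iset ∩ cellIco n k) ×ˢ Qset, Fk k z.2 := by
    intro k
    rw [step3 k]
    have h := (hmp i).setLIntegral_comp_preimage_emb (eqv i).measurableEmbedding
      (fun z => Fk k z.2) ((Iset ∩ cellIco n k) ×ˢ Qset)
    rw [← h]
    apply lintegral_congr
    intro x
    rw [eqv_apply]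
  have step5 : ∀ k : ℤ, (∫⁻ z in (Iset ∩ cellIco n k) ×ˢ Qset, Fk k z.2 ∂(volume : Measure (ℝ × Y2)))
      ≤ ENNReal.ofReal (eps n) * ∫⁻ y in Qset, Fk k y := by
    intro k
    rw [Measure.volume_eq_prod, ← Measure.prod_restrict]
    rw [lintegral_prod (fun z => Fk k z.2) ((hFkm k).comp measurable_snd).aemeasurable]
    calc (∫⁻ t in Iset ∩ cellIco n k, ∫⁻ y in Qset, (fun z : ℝ × Y2 => Fk k z.2) (t, y))
        = (∫⁻ _ in Iset ∩ cellIco n k, ∫⁻ y in Qset, Fk k y) := rfl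
      _ = (∫⁻ y in Qset, Fk k y) * volume (Iset ∩ cellIco n k) := by
          rw [lintegral_const, Measure.restrict_apply_univ]
      _ ≤ (∫⁻ y in Qset, Fk k y) * ENNReal.ofReal (eps n) := by
          apply mul_le_mul_right
          rw [← volume_cellIco n k]
          exact measure_mono Set.inter_subset_right
      _ = ENNReal.ofReal (eps n) * ∫⁻ y in Qset, Fk k y := mul_comm _ _
  -- step 6/7 : sum the transverse integrals
  have step7 : ∀ y : Y2, (∑' k : ℤ, Fk k y) = ∫⁻ τ, q (τ, y) ∂(volume : Measure ℝ) := by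
    intro y
    have h1 : ∀ k : ℤ, Fk k y = ∫⁻ τ in cellIco n k, q (τ, y) := by
      intro k
      rw [hFk]
      exact (setLIntegral_congr (Ico_ae_eq_Icc)).symm
    calc (∑' k : ℤ, Fk k y) = ∑' k : ℤ, ∫⁻ τ in cellIco n k, q (τ, y) := by
          exact tsum_congr h1
      _ = ∫⁻ τ in ⋃ k : ℤ, cellIco n k, q (τ, y) :=
          (lintegral_iUnion (fun k => measurableSet_Ico) (cellIco_disjoint n) _).symm
      _ = ∫⁻ τ, q (τ, y) := by rw [iUnion_cellIco, Measure.restrict_univ]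
  have step6 : (∑' k : ℤ, ∫⁻ y in Qset, Fk k y) = ∫⁻ y in Qset, ∫⁻ τ, q (τ, y) := by
    rw [← lintegral_tsum (fun k => (hFkm k).aemeasurable)]
    apply lintegral_congr
    intro y
    exact step7 y
  have step9 : (∫⁻ y, (∫⁻ τ, q (τ, y) ∂(volume : Measure ℝ)) ∂(volume : Measure Y2))
      = ∫⁻ x, ENNReal.ofReal (g0 x ^ 2) ∂(volume : Measure E3) := by
    rw [← lintegral_prod_symm q hqm.aemeasurable, ← Measure.volume_eq_prod]
    exact (MeasurePreserving.symm (eqv i) (hmp i)).lintegral_comp_emb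
      (eqv i).symm.measurableEmbedding (fun x => ENNReal.ofReal (g0 x ^ 2))
  calc (∫⁻ x in Omg, Hl n i g0 x)
      ≤ ∑' k : ℤ, ∫⁻ x in Omg ∩ Sk k, Hl n i g0 x := step1
    _ = ∑' k : ℤ, ∫⁻ z in (Iset ∩ cellIco n k) ×ˢ Qset, Fk k z.2 := by
        apply tsum_congr
        intro k
        rw [step2 k, step4 k]
    _ ≤ ∑' k : ℤ, ENNReal.ofReal (eps n) * ∫⁻ y in Qset, Fk k y :=
        ENNReal.tsum_le_tsum step5
    _ = ENNReal.ofReal (eps n) * ∑' k : ℤ, ∫⁻ y in Qset, Fk k y := ENNReal.tsum_mul_left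
    _ = ENNReal.ofReal (eps n) * ∫⁻ y in Qset, ∫⁻ τ, q (τ, y) := by rw [step6]
    _ ≤ ENNReal.ofReal (eps n) * ∫⁻ y, ∫⁻ τ, q (τ, y) :=
        mul_le_mul_right (setLIntegral_le_lintegral _ _) _
    _ = ENNReal.ofReal (eps n) * ∫⁻ x, ENNReal.ofReal (g0 x ^ 2) := by rw [step9]

lemma uIoc_subset_Ioo {a b lo hi : ℝ} (ha : a ∈ Set.Ioo lo hi) (hb : b ∈ Set.Ioo lo hi) :
    Set.uIoc a b ⊆ Set.Ioo lo hi := by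
  intro τ hτ
  rw [Set.mem_uIoc] at hτ
  rcases hτ with ⟨h1, h2⟩ | ⟨h1, h2⟩
  · exact ⟨lt_trans ha.1 h1, lt_of_le_of_lt h2 hb.2⟩
  · exact ⟨lt_trans hb.1 h1, lt_of_le_of_lt h2 ha.2⟩

lemma uIoc_subset_Icc {a b lo hi : ℝ} (ha : a ∈ Set.Icc lo hi) (hb : b ∈ Set.Icc lo hi) :
    Set.uIoc a b ⊆ Set.Icc lo hi := by
  intro τ hτ
  rw [Set.mem_uIoc] at hτ
  rcases hτ with ⟨h1, h2⟩ | ⟨h1, h2⟩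
  · exact ⟨le_of_lt (lt_of_le_of_lt ha.1 h1), le_trans h2 hb.2⟩
  · exact ⟨le_of_lt (lt_of_le_of_lt hb.1 h1), le_trans h2 ha.2⟩

end St4

/-- inequality (15):
`‖G^i_ε(u) − u‖_{L²(Ω)} ≤ ε ‖∂u/∂x_i‖_{L²(Ω)}`. -/
theorem statement4 (n : ℕ) (r : Fin 3 → ℝ) (hr : ∀ i, 0 < r i)
    (hre : ∀ i, r i < eps n / 2) (u : H1) (i : Fin 3) :
    Real.sqrt (∫ x in Omg, (Gop n (r i) i u.u x - u.u x)^2)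
      ≤ eps n * Real.sqrt (∫ x in Omg, (u.grad x i)^2) := by
  classical
  have hε := St4.eps_pos n
  have hr0 : 0 < r i := hr i
  have hrh : r i < eps n / 2 := hre i
  -- a measurable representative of the i-th partial derivative
  have hv : MemLp (fun x => u.grad x i) 2 (volume.restrict Omg) := by
    refine MemLp.of_le u.mem_grad ((continuous_apply i).comp_aestronglyMeasurable u.mem_grad.1) ?_
    filter_upwards with x
    exact norm_le_pi_norm (u.grad x) i
  set G0 : E3 → ℝ := hv.1.mk (fun x => u.grad x i) with hG0def
  have hG0sm : StronglyMeasurable G0 := hv.1.stronglyMeasurable_mk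
  have hG0ae : (fun x => u.grad x i) =ᵐ[volume.restrict Omg] G0 := hv.1.ae_eq_mk
  set g0 : E3 → ℝ := Omg.indicator G0 with hg0def
  have hg0m : Measurable g0 := hG0sm.measurable.indicator St4.measurableSet_Omg
  have hcong : ∀ᵐ x ∂(volume.restrict Omg), u.grad x i = g0 x := by
    filter_upwards [hG0ae, ae_restrict_mem St4.measurableSet_Omg] with x h1 h2
    rw [hg0def, Set.indicator_of_mem h2]
    exact h1
  -- the L² mass of the derivative
  set L := ∫⁻ x in Omg, ENNReal.ofReal ((u.grad x i) ^ 2) with hLdef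
  have hsqI : Integrable (fun x => (u.grad x i) ^ 2) (volume.restrict Omg) := hv.integrable_sq
  have hLfin : L ≠ ⊤ := by
    have h := hsqI.hasFiniteIntegral
    rw [hasFiniteIntegral_iff_ofReal (Filter.Eventually.of_forall fun x => sq_nonneg _)] at h
    exact h.ne
  have hLg0 : (∫⁻ x in Omg, ENNReal.ofReal (g0 x ^ 2)) = L := by
    apply lintegral_congr_ae
    filter_upwards [hcong] with x h
    rw [h]
  have hfull : (∫⁻ x, ENNReal.ofReal (g0 x ^ 2) ∂(volume : Measure E3)) = L := by
    rw [← lintegral_add_compl (fun x => ENNReal.ofReal (g0 x ^ 2)) St4.measurableSet_Omg]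
    have hzero : (∫⁻ x in Omgᶜ, ENNReal.ofReal (g0 x ^ 2)) = ∫⁻ _ in Omgᶜ, (0 : ENNReal) := by
      apply setLIntegral_congr_fun St4.measurableSet_Omg.compl
      intro x hx
      show ENNReal.ofReal (g0 x ^ 2) = 0
      rw [hg0def, Set.indicator_of_notMem hx]
      norm_num
    rw [hzero, lintegral_zero, hLg0, add_zero]
  have hfull_ne : (∫⁻ x, ENNReal.ofReal (g0 x ^ 2) ∂(volume : Measure E3)) ≠ ⊤ := by
    rw [hfull]; exact hLfin
  -- slicing facts
  have hBfull : ∀ᵐ x ∂(volume : Measure E3), x ∈ Omg → u.grad x i = g0 x :=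
    ae_imp_of_ae_restrict hcong
  have hB0 := St4.ae_update (P := fun z => z ∈ Omg → u.grad z i = g0 z) i hBfull
  have hC0 := St4.ae_update_lintegral_fin i (fun z => ENNReal.ofReal (g0 z ^ 2))
    ((hg0m.pow_const 2).ennreal_ofReal) hfull_ne
  -- the pointwise (a.e.) bound
  have key : ∀ᵐ x ∂(volume.restrict Omg),
      ENNReal.ofReal ((Gop n (r i) i u.u x - u.u x) ^ 2)
        ≤ ENNReal.ofReal (eps n) * St4.Hl n i g0 x := by
    filter_upwards [ae_restrict_mem St4.measurableSet_Omg, u.line i,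
      ae_restrict_of_ae hB0, ae_restrict_of_ae hC0] with x hmem hline hslice hfin
    have ht0I : x i ∈ St4.Iset := hmem i
    obtain ⟨hb1, hb2⟩ := St4.cen_bounds n ht0I
    set c := cen n (x i) with hc
    set B := Set.Icc (c - eps n / 2) (c + eps n / 2) with hBdef
    have ht0B : x i ∈ B := by
      have h := St4.mem_cell n (x i)
      exact ⟨h.1, h.2.le⟩
    have hcmI : c - r i ∈ St4.Iset := ⟨by linarith, by linarith⟩
    have hcpI : c + r i ∈ St4.Iset := ⟨by linarith, by linarith⟩
    have hcmB : c - r i ∈ B := ⟨by linarith, by linarith⟩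
    have hcpB : c + r i ∈ B := ⟨by linarith, by linarith⟩
    have hx_upd : Function.update x i (x i) = x := Function.update_eq_self i x
    have hD1 := hline (x i) (c - r i) (by rw [hx_upd]; exact hmem) (St4.update_mem_Omg hmem hcmI)
    have hD2 := hline (x i) (c + r i) (by rw [hx_upd]; exact hmem) (St4.update_mem_Omg hmem hcpI)
    rw [hx_upd] at hD1 hD2
    set q' : ℝ → ℝ := fun τ => g0 (Function.update x i τ) with hq'def
    have hq'm : Measurable q' := hg0m.comp (measurable_update x)
    -- replace the derivative by its representative inside the line integrals
    have hcongr1 : (∫ τ in (x i)..(c - r i), u.grad (Function.update x i τ) i)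
        = ∫ τ in (x i)..(c - r i), q' τ := by
      apply intervalIntegral.integral_congr_ae
      filter_upwards [hslice] with τ hτ hmemτ
      exact hτ (St4.update_mem_Omg hmem (St4.uIoc_subset_Ioo ht0I hcmI hmemτ))
    have hcongr2 : (∫ τ in (x i)..(c + r i), u.grad (Function.update x i τ) i)
        = ∫ τ in (x i)..(c + r i), q' τ := by
      apply intervalIntegral.integral_congr_ae
      filter_upwards [hslice] with τ hτ hmemτ
      exact hτ (St4.update_mem_Omg hmem (St4.uIoc_subset_Ioo ht0I hcpI hmemτ))
    -- integrability on the cell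
    have hBvol : volume B ≠ ⊤ := by
      rw [hBdef, Real.volume_Icc]; exact ENNReal.ofReal_ne_top
    haveI : IsFiniteMeasure (volume.restrict B) :=
      ⟨by rw [Measure.restrict_apply_univ]; exact hBvol.lt_top⟩
    have hsqB : Integrable (fun τ => q' τ ^ 2) (volume.restrict B) := by
      constructor
      · exact (hq'm.pow_const 2).aestronglyMeasurable
      · rw [hasFiniteIntegral_iff_ofReal (Filter.Eventually.of_forall fun τ => sq_nonneg _)]
        exact lt_of_le_of_lt (setLIntegral_le_lintegral _ _) hfin.lt_top
    have hq'abs : AEStronglyMeasurable (fun τ => |q' τ|) (volume.restrict B) := by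
      simpa [Real.norm_eq_abs] using (hq'm.aestronglyMeasurable (μ := volume.restrict B)).norm
    have habsB : Integrable (fun τ => |q' τ|) (volume.restrict B) := by
      refine Integrable.mono' (((integrable_const (1 : ℝ)).add hsqB).div_const 2) hq'abs ?_
      filter_upwards with τ
      simp only [Pi.add_apply]
      rw [Real.norm_eq_abs, abs_abs]
      nlinarith [sq_nonneg (|q' τ| - 1), sq_abs (q' τ)]
    -- interval integral bounds
    have hbnd1 : |∫ τ in (x i)..(c - r i), q' τ| ≤ ∫ τ in B, |q' τ| := by
      calc |∫ τ in (x i)..(c - r i), q' τ| ≤ ∫ τ in Set.uIoc (x i) (c - r i), |q' τ| := by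
            have h := intervalIntegral.norm_integral_le_integral_norm_uIoc
              (a := x i) (b := c - r i) (f := q') (μ := volume)
            simpa [Real.norm_eq_abs] using h
        _ ≤ ∫ τ in B, |q' τ| :=
            setIntegral_mono_set habsB (Filter.Eventually.of_forall fun τ => abs_nonneg _)
              (HasSubset.Subset.eventuallyLE (St4.uIoc_subset_Icc ht0B hcmB))
    have hbnd2 : |∫ τ in (x i)..(c + r i), q' τ| ≤ ∫ τ in B, |q' τ| := by
      calc |∫ τ in (x i)..(c + r i), q' τ| ≤ ∫ τ in Set.uIoc (x i) (c + r i), |q' τ| := by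
            have h := intervalIntegral.norm_integral_le_integral_norm_uIoc
              (a := x i) (b := c + r i) (f := q') (μ := volume)
            simpa [Real.norm_eq_abs] using h
        _ ≤ ∫ τ in B, |q' τ| :=
            setIntegral_mono_set habsB (Filter.Eventually.of_forall fun τ => abs_nonneg _)
              (HasSubset.Subset.eventuallyLE (St4.uIoc_subset_Icc ht0B hcpB))
    -- FTC identity
    have e1 : u.u (Function.update x i (c - r i)) = u.u x + ∫ τ in (x i)..(c - r i), q' τ := by
      rw [← hcongr1]; linarith [hD1]
    have e2 : u.u (Function.update x i (c + r i)) = u.u x + ∫ τ in (x i)..(c + r i), q' τ := by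
      rw [← hcongr2]; linarith [hD2]
    have hGop : Gop n (r i) i u.u x - u.u x
        = ((∫ τ in (x i)..(c - r i), q' τ) + (∫ τ in (x i)..(c + r i), q' τ)) / 2 := by
      show (u.u (Function.update x i (cen n (x i) - r i))
        + u.u (Function.update x i (cen n (x i) + r i))) / 2 - u.u x = _
      rw [← hc, e1, e2]
      ring
    set M := ∫ τ in B, |q' τ| with hMdef
    have hM0 : 0 ≤ M := integral_nonneg fun τ => abs_nonneg _
    have habs_le : |Gop n (r i) i u.u x - u.u x| ≤ M := by
      rw [hGop, abs_div, abs_two]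
      have h := abs_add_le (∫ τ in (x i)..(c - r i), q' τ) (∫ τ in (x i)..(c + r i), q' τ)
      linarith [hbnd1, hbnd2]
    have hsq_le : (Gop n (r i) i u.u x - u.u x) ^ 2 ≤ M ^ 2 := by
      have h := abs_le.mp habs_le
      exact sq_le_sq' h.1 h.2
    have hCS := St4.cs_sq (μ := volume.restrict B) (hq'm.aestronglyMeasurable) hsqB
    have hvolB : ((volume.restrict B) Set.univ).toReal = eps n := by
      rw [Measure.restrict_apply_univ, hBdef, Real.volume_Icc,
        show c + eps n / 2 - (c - eps n / 2) = eps n by ring, ENNReal.toReal_ofReal hε.le]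
    have hint_eq : (∫ τ in B, q' τ ^ 2) = (St4.Hl n i g0 x).toReal := by
      rw [integral_eq_lintegral_of_nonneg_ae (Filter.Eventually.of_forall fun τ => sq_nonneg _)
        (hq'm.pow_const 2).aestronglyMeasurable]
      rfl
    have hreal : (Gop n (r i) i u.u x - u.u x) ^ 2 ≤ eps n * (St4.Hl n i g0 x).toReal := by
      calc (Gop n (r i) i u.u x - u.u x) ^ 2 ≤ M ^ 2 := hsq_le
        _ ≤ ((volume.restrict B) Set.univ).toReal * ∫ τ in B, q' τ ^ 2 := hCS
        _ = eps n * (St4.Hl n i g0 x).toReal := by rw [hvolB, hint_eq]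
    calc ENNReal.ofReal ((Gop n (r i) i u.u x - u.u x) ^ 2)
        ≤ ENNReal.ofReal (eps n * (St4.Hl n i g0 x).toReal) := ENNReal.ofReal_le_ofReal hreal
      _ = ENNReal.ofReal (eps n) * ENNReal.ofReal ((St4.Hl n i g0 x).toReal) :=
          ENNReal.ofReal_mul hε.le
      _ ≤ ENNReal.ofReal (eps n) * St4.Hl n i g0 x :=
          mul_le_mul_right ENNReal.ofReal_toReal_le _
  -- the global chain of inequalities
  have hchain : (∫⁻ x in Omg, ENNReal.ofReal ((Gop n (r i) i u.u x - u.u x) ^ 2))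
      ≤ ENNReal.ofReal (eps n) * (ENNReal.ofReal (eps n) * L) := by
    calc (∫⁻ x in Omg, ENNReal.ofReal ((Gop n (r i) i u.u x - u.u x) ^ 2))
        ≤ ∫⁻ x in Omg, ENNReal.ofReal (eps n) * St4.Hl n i g0 x := lintegral_mono_ae key
      _ = ENNReal.ofReal (eps n) * ∫⁻ x in Omg, St4.Hl n i g0 x :=
          lintegral_const_mul' _ _ ENNReal.ofReal_ne_top
      _ ≤ ENNReal.ofReal (eps n) * (ENNReal.ofReal (eps n) *
            ∫⁻ x, ENNReal.ofReal (g0 x ^ 2)) :=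
          mul_le_mul_right (St4.tonelli_bound n i g0 hg0m) _
      _ = ENNReal.ofReal (eps n) * (ENNReal.ofReal (eps n) * L) := by rw [hfull]
  -- convert to real integrals
  have hAESMsq : AEStronglyMeasurable (fun x => (u.grad x i) ^ 2) (volume.restrict Omg) :=
    (hv.aestronglyMeasurable.mul hv.aestronglyMeasurable).congr
      (Filter.Eventually.of_forall fun x => (pow_two _).symm)
  have hBreal : (∫ x in Omg, (u.grad x i) ^ 2) = L.toReal := by
    rw [integral_eq_lintegral_of_nonneg_ae (Filter.Eventually.of_forall fun x => sq_nonneg _)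
      hAESMsq]
  have hA : (∫ x in Omg, (Gop n (r i) i u.u x - u.u x) ^ 2)
      ≤ (eps n) ^ 2 * ∫ x in Omg, (u.grad x i) ^ 2 := by
    by_cases hInt : Integrable (fun x => (Gop n (r i) i u.u x - u.u x) ^ 2) (volume.restrict Omg)
    · rw [integral_eq_lintegral_of_nonneg_ae (Filter.Eventually.of_forall fun x => sq_nonneg _)
        hInt.1, hBreal]
      have hne : ENNReal.ofReal (eps n) * (ENNReal.ofReal (eps n) * L) ≠ ⊤ :=
        ENNReal.mul_ne_top ENNReal.ofReal_ne_top (ENNReal.mul_ne_top ENNReal.ofReal_ne_top hLfin)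
      have h := ENNReal.toReal_mono hne hchain
      rw [ENNReal.toReal_mul, ENNReal.toReal_mul, ENNReal.toReal_ofReal hε.le] at h
      calc ((∫⁻ x in Omg, ENNReal.ofReal ((Gop n (r i) i u.u x - u.u x) ^ 2)).toReal)
          ≤ eps n * (eps n * L.toReal) := h
        _ = (eps n) ^ 2 * L.toReal := by ring
    · rw [integral_undef hInt]
      exact mul_nonneg (sq_nonneg _) (integral_nonneg fun x => sq_nonneg _)
  have hBnn : 0 ≤ ∫ x in Omg, (u.grad x i) ^ 2 := integral_nonneg fun x => sq_nonneg _
  calc Real.sqrt (∫ x in Omg, (Gop n (r i) i u.u x - u.u x) ^ 2)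
      ≤ Real.sqrt ((eps n) ^ 2 * ∫ x in Omg, (u.grad x i) ^ 2) := Real.sqrt_le_sqrt hA
    _ = eps n * Real.sqrt (∫ x in Omg, (u.grad x i) ^ 2) := by
        rw [Real.sqrt_mul (sq_nonneg _), Real.sqrt_sq hε.le]
end
end

section
/- For any φ ∈ D(Ω), the control-zone test function v_ε(φ) = Σ_{i=1}^3 [(1 − r^i_ε/R^i_ε)φ + (φ^i_ε − φ) w^i_ε] belongs to W^{1,∞}_0(Ω) and satisfies ‖∇v_ε(φ)‖_{L²(C_ε)} ≤ C ‖∇φ‖_{L^∞(Ω)} Σ_{i=1}^3 (R^i_ε/ε)^{1/2}, with C independent of ε; in particular ‖∇v_ε(φ)‖_{L²(C_ε)} → 0 as ε → 0. -/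
open MeasureTheory Filter Topology Function

noncomputable section

lemma eps_pos (n : ℕ) : 0 < eps n := by
  unfold eps; positivity

lemma round_nearest (u : ℝ) (m : ℤ) : |u - round u| ≤ |u - m| := by
  rcases eq_or_ne m (round u) with h | h
  · rw [h]
  · have h1 : (1:ℝ) ≤ |(round u : ℝ) - m| := by
      have hne : round u - m ≠ 0 := sub_ne_zero.mpr (Ne.symm h)
      exact_mod_cast Int.one_le_abs hne
    have h2 := abs_sub_round u
    have h3 : |(round u:ℝ) - m| ≤ |u - m| + |u - round u| := by
      calc |(round u:ℝ) - m| = |(u - m) + -(u - round u)| := by ring_nf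
        _ ≤ |u - m| + |-(u - round u)| := abs_add_le _ _
        _ = |u - m| + |u - round u| := by rw [abs_neg]
    linarith

lemma distLat_eq (n : ℕ) (t : ℝ) :
    distLat n t = eps n * |t / eps n - (round (t / eps n) : ℝ)| := by
  have he := eps_pos n
  have h : t - cen n t = eps n * (t / eps n - (round (t / eps n) : ℝ)) := by
    unfold cen; field_simp
  rw [distLat, h, abs_mul, abs_of_pos he]

lemma distLat_le (n : ℕ) (t : ℝ) (m : ℤ) : distLat n t ≤ |t - eps n * m| := by
  have he := eps_pos n
  have h2 : t - eps n * m = eps n * (t / eps n - (m : ℝ)) := by field_simp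
  rw [distLat_eq, h2, abs_mul, abs_of_pos he]
  exact mul_le_mul_of_nonneg_left (round_nearest _ m) he.le

lemma distLat_nonneg (n : ℕ) (t : ℝ) : 0 ≤ distLat n t := abs_nonneg _

lemma distLat_le_half (n : ℕ) (t : ℝ) : distLat n t ≤ eps n / 2 := by
  have he := eps_pos n
  rw [distLat_eq]
  calc eps n * |t / eps n - (round (t / eps n) : ℝ)| ≤ eps n * (1/2) :=
        mul_le_mul_of_nonneg_left (abs_sub_round _) he.le
    _ = eps n / 2 := by ring

lemma distLat_lip (n : ℕ) (s t : ℝ) : |distLat n s - distLat n t| ≤ |s - t| := by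
  have h1 : distLat n s ≤ |s - t| + distLat n t := by
    calc distLat n s ≤ |s - cen n t| := distLat_le n s _
      _ = |(s - t) + (t - cen n t)| := by ring_nf
      _ ≤ |s - t| + |t - cen n t| := abs_add_le _ _
      _ = |s - t| + distLat n t := rfl
  have h2 : distLat n t ≤ |s - t| + distLat n s := by
    calc distLat n t ≤ |t - cen n s| := distLat_le n t _
      _ = |(t - s) + (s - cen n s)| := by ring_nf
      _ ≤ |t - s| + |s - cen n s| := abs_add_le _ _
      _ = |s - t| + distLat n s := by rw [abs_sub_comm t s]; rfl
  rw [abs_sub_le_iff]; constructor <;> linarith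

lemma cen_sep {n : ℕ} {s t : ℝ} (h : cen n s ≠ cen n t) :
    (eps n / 2 - distLat n s) + (eps n / 2 - distLat n t) ≤ |s - t| := by
  have he := eps_pos n
  have key : ∀ u v : ℝ, round u < round v →
      (1/2 - |u - round u|) + (1/2 - |v - round v|) ≤ |u - v| := by
    intro u v huv
    have h1 : (round u : ℝ) + 1 ≤ round v := by exact_mod_cast huv
    have h2 := le_abs_self (u - (round u : ℝ))
    have h3 := neg_abs_le (v - (round v : ℝ))
    have h4 : v - u ≤ |u - v| := by rw [abs_sub_comm]; exact le_abs_self _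
    linarith
  have hrne : round (s / eps n) ≠ round (t / eps n) := by
    intro hrr; exact h (by unfold cen; rw [hrr])
  have hst : (1/2 - |s / eps n - round (s / eps n)|)
      + (1/2 - |t / eps n - round (t / eps n)|) ≤ |s / eps n - t / eps n| := by
    rcases lt_or_gt_of_ne hrne with hlt | hgt
    · exact key _ _ hlt
    · have := key _ _ hgt
      rw [abs_sub_comm (s / eps n) (t / eps n)]; linarith
  have habs : |s - t| = eps n * |s / eps n - t / eps n| := by
    have hh : eps n * (s / eps n - t / eps n) = s - t := by field_simp
    rw [← hh, abs_mul, abs_of_pos he]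
  rw [distLat_eq, distLat_eq, habs]
  nlinarith [mul_le_mul_of_nonneg_left hst he.le]

lemma wfun_nonneg (n : ℕ) (r R : ℝ) (i : Fin 3) (x : E3) : 0 ≤ wfun n r R i x :=
  le_max_left _ _

lemma wfun_le_one {n : ℕ} {r R : ℝ} (hr : 0 ≤ r) (hR : 0 < R) (i : Fin 3) (x : E3) :
    wfun n r R i x ≤ 1 := by
  apply max_le (by norm_num)
  have h1 : 0 ≤ max r (distLat n (x i)) := le_trans hr (le_max_left _ _)
  have := div_nonneg h1 hR.le
  linarith

lemma wfun_eq_zero {n : ℕ} {r R : ℝ} (hR : 0 < R) {i : Fin 3} {x : E3}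
    (h : R ≤ distLat n (x i)) : wfun n r R i x = 0 := by
  apply max_eq_left
  have h1 : R ≤ max r (distLat n (x i)) := le_trans h (le_max_right _ _)
  have := (div_le_div_iff_of_pos_right hR).2 h1
  rw [div_self hR.ne'] at this
  linarith

lemma wfun_le_slack {n : ℕ} {r R : ℝ} (hR : 0 < R) (hRe : R ≤ eps n / 2)
    (i : Fin 3) (x : E3) :
    wfun n r R i x ≤ (eps n / 2 - distLat n (x i)) / R := by
  have hd2 := distLat_le_half n (x i)
  have hd0 := distLat_nonneg n (x i)
  apply max_le
  · apply div_nonneg (by linarith) hR.le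
  · calc 1 - max r (distLat n (x i)) / R ≤ 1 - distLat n (x i) / R := by
          gcongr; exact le_max_right _ _
      _ = (R - distLat n (x i)) / R := by field_simp
      _ ≤ (eps n / 2 - distLat n (x i)) / R := by gcongr

lemma wfun_lip {n : ℕ} {r R : ℝ} (hR : 0 < R) (i : Fin 3) (x y : E3) :
    |wfun n r R i x - wfun n r R i y| ≤ (1 / R) * dist x y := by
  have h1 : |wfun n r R i x - wfun n r R i y|
      ≤ |(1 - max r (distLat n (x i)) / R) - (1 - max r (distLat n (y i)) / R)| := by
    rw [wfun, wfun, max_comm 0 _, max_comm 0 _]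
    exact abs_max_sub_max_le_abs _ _ _
  have h2 : (1 - max r (distLat n (x i)) / R) - (1 - max r (distLat n (y i)) / R)
      = (max (distLat n (y i)) r - max (distLat n (x i)) r) / R := by
    rw [max_comm r, max_comm r]; ring
  have h3 : |max (distLat n (y i)) r - max (distLat n (x i)) r|
      ≤ |distLat n (y i) - distLat n (x i)| := abs_max_sub_max_le_abs _ _ _
  have h4 : |distLat n (y i) - distLat n (x i)| ≤ |y i - x i| := distLat_lip n _ _
  have h5 : |y i - x i| ≤ dist x y := by
    rw [← Real.dist_eq, dist_comm (y i)]; exact dist_le_pi_dist x y i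
  calc |wfun n r R i x - wfun n r R i y|
      ≤ |(max (distLat n (y i)) r - max (distLat n (x i)) r) / R| := by rw [← h2]; exact h1
    _ = |max (distLat n (y i)) r - max (distLat n (x i)) r| / R := by
        rw [abs_div, abs_of_pos hR]
    _ ≤ dist x y / R := by gcongr; exact h3.trans (h4.trans h5)
    _ = (1 / R) * dist x y := by ring

lemma testfun_bound {φ : E3 → ℝ} (hφ : TestFun φ) : ∃ M, 0 ≤ M ∧ ∀ x, |φ x| ≤ M := by
  obtain ⟨C, hC⟩ := (hφ.1.continuous.norm).bounded_above_of_compact_support hφ.2.1.norm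
  exact ⟨max C 0, le_max_right _ _, fun x => le_trans (by simpa using hC x) (le_max_left _ _)⟩

lemma testfun_grad {φ : E3 → ℝ} (hφ : TestFun φ) :
    0 ≤ gradSup φ ∧ (∀ x j, |fderiv ℝ φ x (Pi.single j 1)| ≤ gradSup φ) ∧
    (∀ x y : E3, |φ x - φ y| ≤ 3 * gradSup φ * dist x y) := by
  obtain ⟨hsm, hcs, hsupp⟩ := hφ
  set g : E3 → ℝ := fun x => Real.sqrt (∑ j, (fderiv ℝ φ x (Pi.single j 1))^2) with hg
  have hfc : Continuous fun x => fderiv ℝ φ x := hsm.continuous_fderiv (by simp)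
  have hgc : Continuous g := by
    apply Real.continuous_sqrt.comp
    apply continuous_finset_sum
    intro j _
    exact ((ContinuousLinearMap.apply ℝ ℝ (Pi.single j 1 : E3)).continuous.comp hfc).pow 2
  have hgs : HasCompactSupport g := by
    apply HasCompactSupport.intro hcs
    intro x hx
    have h0 : φ =ᶠ[𝓝 x] fun _ => 0 := by
      have hmem : (tsupport φ)ᶜ ∈ 𝓝 x := ((isClosed_tsupport φ).isOpen_compl).mem_nhds hx
      filter_upwards [hmem] with y hy using image_eq_zero_of_notMem_tsupport hy
    have hz : fderiv ℝ φ x = 0 := by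
      rw [h0.fderiv_eq]; exact fderiv_const_apply 0
    simp [hg, hz]
  obtain ⟨C0, hC0⟩ := hgc.bounded_above_of_compact_support hgs
  have hbdd : BddAbove (Set.range g) := ⟨C0, by rintro _ ⟨x, rfl⟩; exact le_trans (le_abs_self _) (by simpa [Real.norm_eq_abs] using hC0 x)⟩
  have hle : ∀ x, g x ≤ gradSup φ := fun x => le_ciSup hbdd x
  have hG0 : 0 ≤ gradSup φ := le_trans (Real.sqrt_nonneg _) (hle (fun _ => 0))
  have hcomp : ∀ x j, |fderiv ℝ φ x (Pi.single j 1)| ≤ gradSup φ := by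
    intro x j
    have h1 : (fderiv ℝ φ x (Pi.single j 1))^2 ≤ ∑ j', (fderiv ℝ φ x (Pi.single j' 1))^2 :=
      Finset.single_le_sum (f := fun j' => (fderiv ℝ φ x (Pi.single j' 1))^2) (fun _ _ => sq_nonneg _) (Finset.mem_univ j)
    calc |fderiv ℝ φ x (Pi.single j 1)| = Real.sqrt ((fderiv ℝ φ x (Pi.single j 1))^2) :=
          (Real.sqrt_sq_eq_abs _).symm
      _ ≤ g x := Real.sqrt_le_sqrt h1
      _ ≤ gradSup φ := hle x
  refine ⟨hG0, hcomp, ?_⟩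
  intro x y
  have hop : ∀ z : E3, ‖fderiv ℝ φ z‖ ≤ 3 * gradSup φ := by
    intro z
    apply ContinuousLinearMap.opNorm_le_bound _ (by positivity)
    intro v
    have hv : v = ∑ j, v j • (Pi.single j 1 : E3) := by
      ext k
      simp [Pi.single_apply, Finset.sum_apply]
    calc ‖fderiv ℝ φ z v‖ = ‖∑ j, v j * fderiv ℝ φ z (Pi.single j 1)‖ := by
          conv_lhs => rw [hv]
          rw [map_sum]
          simp [smul_eq_mul]
      _ ≤ ∑ j, ‖v j * fderiv ℝ φ z (Pi.single j 1)‖ := norm_sum_le _ _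
      _ ≤ ∑ _j : Fin 3, ‖v‖ * gradSup φ := by
          apply Finset.sum_le_sum
          intro j _
          rw [norm_mul]
          exact mul_le_mul (norm_le_pi_norm v j) (by simpa using hcomp z j)
            (norm_nonneg _) (norm_nonneg _)
      _ = 3 * gradSup φ * ‖v‖ := by simp [Finset.sum_const]; ring
  have hdiff : ∀ z ∈ Set.univ, DifferentiableAt ℝ φ z :=
    fun z _ => (hsm.differentiable (by simp)) z
  have hmv := convex_univ.norm_image_sub_le_of_norm_fderiv_le hdiff (fun z _ => hop z)
    (Set.mem_univ y) (Set.mem_univ x)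
  rw [← dist_eq_norm] at hmv
  rw [← Real.dist_eq]; exact hmv

lemma dist_update_le (x y : E3) (i : Fin 3) (c : ℝ) :
    dist (update x i c) (update y i c) ≤ dist x y := by
  rw [dist_pi_le_iff dist_nonneg]
  intro j
  rcases eq_or_ne j i with rfl | hj
  · simpa using dist_nonneg
  · rw [update_of_ne hj, update_of_ne hj]
    exact dist_le_pi_dist x y j

lemma dist_update_self (x : E3) (i : Fin 3) (c : ℝ) :
    dist (update x i c) x ≤ |c - x i| := by
  rw [dist_pi_le_iff (abs_nonneg _)]
  intro j
  rcases eq_or_ne j i with rfl | hj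
  · simp [Real.dist_eq]
  · simp [update_of_ne hj]

lemma step_mul_w {n : ℕ} {r R : ℝ} (hR : 0 < R) (i : Fin 3) (φ : E3 → ℝ) (x : E3) :
    stepApprox n R i φ x * wfun n r R i x
      = φ (update x i (cen n (x i))) * wfun n r R i x := by
  by_cases h : distLat n (x i) < R
  · rw [stepApprox, if_pos h]
  · rw [wfun_eq_zero hR (not_lt.1 h)]; ring

lemma psiW_lip {n : ℕ} {r R M K : ℝ} {φ : E3 → ℝ} (hr : 0 ≤ r) (hR : 0 < R) (hRe : R ≤ eps n / 2)
    (hM : ∀ z, |φ z| ≤ M) (hK : 0 ≤ K) (hLip : ∀ z w : E3, |φ z - φ w| ≤ K * dist z w)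
    (i : Fin 3) (x y : E3) :
    |φ (update x i (cen n (x i))) * wfun n r R i x
      - φ (update y i (cen n (y i))) * wfun n r R i y| ≤ (M / R + K) * dist x y := by
  have hM0 : 0 ≤ M := le_trans (abs_nonneg _) (hM x)
  rcases eq_or_ne (cen n (x i)) (cen n (y i)) with hc | hc
  · have h1 : |φ (update x i (cen n (x i)))| * |wfun n r R i x - wfun n r R i y|
        ≤ M * ((1/R) * dist x y) :=
      mul_le_mul (hM _) (wfun_lip hR i x y) (abs_nonneg _) hM0
    have h2 : |wfun n r R i y| * |φ (update x i (cen n (x i))) - φ (update y i (cen n (y i)))|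
        ≤ 1 * (K * dist x y) := by
      apply mul_le_mul _ _ (abs_nonneg _) (by norm_num)
      · rw [abs_of_nonneg (wfun_nonneg n r R i y)]
        exact wfun_le_one hr hR i y
      · rw [hc]
        calc |φ (update x i (cen n (y i))) - φ (update y i (cen n (y i)))|
            ≤ K * dist (update x i (cen n (y i))) (update y i (cen n (y i))) := hLip _ _
          _ ≤ K * dist x y := mul_le_mul_of_nonneg_left (dist_update_le x y i _) hK
    calc |φ (update x i (cen n (x i))) * wfun n r R i x
          - φ (update y i (cen n (y i))) * wfun n r R i y|
        = |φ (update x i (cen n (x i))) * (wfun n r R i x - wfun n r R i y)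
            + wfun n r R i y * (φ (update x i (cen n (x i))) - φ (update y i (cen n (y i))))| := by
          ring_nf
      _ ≤ |φ (update x i (cen n (x i))) * (wfun n r R i x - wfun n r R i y)|
            + |wfun n r R i y * (φ (update x i (cen n (x i))) - φ (update y i (cen n (y i))))| :=
          abs_add_le _ _
      _ ≤ M * ((1/R) * dist x y) + 1 * (K * dist x y) := by
          rw [abs_mul, abs_mul]; exact add_le_add h1 h2
      _ = (M / R + K) * dist x y := by ring
  · have hxy : (eps n / 2 - distLat n (x i)) + (eps n / 2 - distLat n (y i)) ≤ |x i - y i| :=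
      cen_sep hc
    have h5 : |x i - y i| ≤ dist x y := by
      rw [← Real.dist_eq]; exact dist_le_pi_dist x y i
    have hwx := wfun_le_slack (r := r) hR hRe i x
    have hwy := wfun_le_slack (r := r) hR hRe i y
    have hb : |φ (update x i (cen n (x i))) * wfun n r R i x
        - φ (update y i (cen n (y i))) * wfun n r R i y|
        ≤ M * wfun n r R i x + M * wfun n r R i y := by
      calc |φ (update x i (cen n (x i))) * wfun n r R i x
            - φ (update y i (cen n (y i))) * wfun n r R i y|
          ≤ |φ (update x i (cen n (x i))) * wfun n r R i x|
              + |φ (update y i (cen n (y i))) * wfun n r R i y| := abs_sub _ _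
        _ = |φ (update x i (cen n (x i)))| * wfun n r R i x
              + |φ (update y i (cen n (y i)))| * wfun n r R i y := by
            rw [abs_mul, abs_mul, abs_of_nonneg (wfun_nonneg n r R i x),
              abs_of_nonneg (wfun_nonneg n r R i y)]
        _ ≤ M * wfun n r R i x + M * wfun n r R i y := by
            apply add_le_add <;>
              exact mul_le_mul_of_nonneg_right (hM _) (wfun_nonneg _ _ _ _ _)
    calc |φ (update x i (cen n (x i))) * wfun n r R i x
          - φ (update y i (cen n (y i))) * wfun n r R i y|
        ≤ M * wfun n r R i x + M * wfun n r R i y := hb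
      _ ≤ M * ((eps n / 2 - distLat n (x i)) / R) + M * ((eps n / 2 - distLat n (y i)) / R) := by
          apply add_le_add <;> exact mul_le_mul_of_nonneg_left (by first | exact hwx | exact hwy) hM0
      _ = (M / R) * ((eps n / 2 - distLat n (x i)) + (eps n / 2 - distLat n (y i))) := by ring
      _ ≤ (M / R) * dist x y := by
          apply mul_le_mul_of_nonneg_left (hxy.trans h5) (by positivity)
      _ ≤ (M / R + K) * dist x y := by
          apply mul_le_mul_of_nonneg_right _ dist_nonneg
          linarith

lemma phiW_lip {n : ℕ} {r R M K : ℝ} {φ : E3 → ℝ} (hr : 0 ≤ r) (hR : 0 < R)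
    (hM : ∀ z, |φ z| ≤ M) (hK : 0 ≤ K) (hLip : ∀ z w : E3, |φ z - φ w| ≤ K * dist z w)
    (i : Fin 3) (x y : E3) :
    |φ x * wfun n r R i x - φ y * wfun n r R i y| ≤ (M / R + K) * dist x y := by
  have hM0 : 0 ≤ M := le_trans (abs_nonneg _) (hM x)
  have h1 : |φ x| * |wfun n r R i x - wfun n r R i y| ≤ M * ((1/R) * dist x y) :=
    mul_le_mul (hM _) (wfun_lip hR i x y) (abs_nonneg _) hM0
  have h2 : |wfun n r R i y| * |φ x - φ y| ≤ 1 * (K * dist x y) := by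
    apply mul_le_mul _ (hLip x y) (abs_nonneg _) (by norm_num)
    rw [abs_of_nonneg (wfun_nonneg n r R i y)]
    exact wfun_le_one hr hR i y
  calc |φ x * wfun n r R i x - φ y * wfun n r R i y|
      = |φ x * (wfun n r R i x - wfun n r R i y) + wfun n r R i y * (φ x - φ y)| := by ring_nf
    _ ≤ |φ x * (wfun n r R i x - wfun n r R i y)| + |wfun n r R i y * (φ x - φ y)| := abs_add_le _ _
    _ ≤ M * ((1/R) * dist x y) + 1 * (K * dist x y) := by
        rw [abs_mul, abs_mul]; exact add_le_add h1 h2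
    _ = (M / R + K) * dist x y := by ring

lemma term_lip {n : ℕ} {r R M K : ℝ} {φ : E3 → ℝ} (hr : 0 < r) (hrR : r < R)
    (hRe : R ≤ eps n / 2)
    (hM : ∀ z, |φ z| ≤ M) (hK : 0 ≤ K) (hLip : ∀ z w : E3, |φ z - φ w| ≤ K * dist z w)
    (i : Fin 3) (x y : E3) :
    |((1 - r / R) * φ x + (stepApprox n R i φ x - φ x) * wfun n r R i x)
      - ((1 - r / R) * φ y + (stepApprox n R i φ y - φ y) * wfun n r R i y)|
      ≤ (3 * K + 2 * (M / R)) * dist x y := by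
  have hR : 0 < R := lt_trans hr hrR
  have hM0 : 0 ≤ M := le_trans (abs_nonneg _) (hM x)
  have e1 : ∀ z : E3, (1 - r / R) * φ z + (stepApprox n R i φ z - φ z) * wfun n r R i z
      = (1 - r / R) * φ z + φ (update z i (cen n (z i))) * wfun n r R i z
        - φ z * wfun n r R i z := by
    intro z
    have := step_mul_w (n := n) (r := r) hR i φ z
    nlinarith [this]
  have habs1 : |1 - r / R| ≤ 1 := by
    rw [abs_le]
    constructor
    · have : r / R ≤ 1 := (div_le_one hR).2 hrR.le
      linarith
    · have : 0 ≤ r / R := div_nonneg hr.le hR.le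
      linarith
  have h1 : |(1 - r / R) * (φ x - φ y)| ≤ 1 * (K * dist x y) := by
    rw [abs_mul]
    exact mul_le_mul habs1 (hLip x y) (abs_nonneg _) (by norm_num)
  have h2 := psiW_lip (n := n) (r := r) hr.le hR hRe hM hK hLip i x y
  have h3 := phiW_lip (n := n) (r := r) hr.le hR hM hK hLip i x y
  rw [e1 x, e1 y]
  have hABD : ((1 - r / R) * φ x + φ (update x i (cen n (x i))) * wfun n r R i x
        - φ x * wfun n r R i x)
      - ((1 - r / R) * φ y + φ (update y i (cen n (y i))) * wfun n r R i y
        - φ y * wfun n r R i y)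
      = ((1 - r / R) * (φ x - φ y))
        + ((φ (update x i (cen n (x i))) * wfun n r R i x
            - φ (update y i (cen n (y i))) * wfun n r R i y)
          - (φ x * wfun n r R i x - φ y * wfun n r R i y)) := by ring
  rw [hABD]
  have hstep : |((1 - r / R) * (φ x - φ y))
        + ((φ (update x i (cen n (x i))) * wfun n r R i x
            - φ (update y i (cen n (y i))) * wfun n r R i y)
          - (φ x * wfun n r R i x - φ y * wfun n r R i y))|
      ≤ |(1 - r / R) * (φ x - φ y)|
        + (|φ (update x i (cen n (x i))) * wfun n r R i x
            - φ (update y i (cen n (y i))) * wfun n r R i y|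
          + |φ x * wfun n r R i x - φ y * wfun n r R i y|) := by
    refine (abs_add_le _ _).trans (add_le_add le_rfl (abs_sub _ _))
  refine hstep.trans ?_
  have htot := add_le_add h1 (add_le_add h2 h3)
  refine htot.trans (le_of_eq (by ring))

lemma phi_zero_outside {φ : E3 → ℝ} (hφ : TestFun φ) {x : E3} (hx : x ∉ Omg) : φ x = 0 :=
  image_eq_zero_of_notMem_tsupport (fun hmem => hx (hφ.2.2 hmem))

lemma step_zero_outside {n : ℕ} {R : ℝ} (hRe : R < eps n / 2) {φ : E3 → ℝ}
    (hφ : TestFun φ) {x : E3} (hx : x ∉ Omg) (i : Fin 3) :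
    stepApprox n R i φ x = 0 := by
  have he := eps_pos n
  rw [Omg, Set.mem_setOf_eq, not_forall] at hx
  obtain ⟨j, hj⟩ := hx
  rcases eq_or_ne j i with rfl | hji
  · by_cases hcen : cen n (x j) ∈ Set.Ioo (-(1/2) : ℝ) (1/2)
    · -- the nearest center is interior, so x j is far from it
      have hmb : |(round (x j / eps n) : ℝ)| ≤ (n : ℝ) := by
        set m := round (x j / eps n) with hm
        have h1 : |cen n (x j)| < 1/2 := by
          rw [abs_lt]; exact ⟨by linarith [hcen.1], hcen.2⟩
        have h2 : |cen n (x j)| = eps n * |(m : ℝ)| := by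
          rw [cen, abs_mul, abs_of_pos he]
        have hpos : (0:ℝ) < 2*(n:ℝ)+1 := by positivity
        have h1' : eps n * |(m : ℝ)| < 1/2 := h2 ▸ h1
        rw [eps, show (1:ℝ)/(2*(n:ℝ)+1) * |(m : ℝ)| = |(m : ℝ)| / (2*(n:ℝ)+1) from by ring,
          div_lt_iff₀ hpos] at h1'
        have h5 : |m| ≤ (n:ℤ) := by
          by_contra hcon
          push_neg at hcon
          have hge : ((n:ℝ) + 1) ≤ ((|m| : ℤ) : ℝ) := by
            exact_mod_cast Int.lt_iff_add_one_le.mp hcon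
          have hc2 : ((|m| : ℤ) : ℝ) = |(m : ℝ)| := by push_cast; ring
          rw [hc2] at hge
          nlinarith
        have h6 : ((|m| : ℤ) : ℝ) ≤ ((n : ℤ) : ℝ) := Int.cast_le.mpr h5
        push_cast at h6
        exact h6
      have hxj : (1:ℝ)/2 ≤ |x j| := by
        rcases le_or_gt (1/2 : ℝ) (x j) with h | h
        · rw [abs_of_nonneg (by linarith)]; exact h
        · have h2 : x j ≤ -(1/2) := by
            by_contra hcon
            push_neg at hcon
            exact hj ⟨by linarith, h⟩
          rw [abs_of_nonpos (by linarith)]; linarith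
      have hfar : eps n / 2 ≤ distLat n (x j) := by
        have h6 : |cen n (x j)| ≤ eps n * n := by
          rw [cen, abs_mul, abs_of_pos he]
          exact mul_le_mul_of_nonneg_left hmb he.le
        have h7 : |x j| - |cen n (x j)| ≤ |x j - cen n (x j)| := abs_sub_abs_le_abs_sub _ _
        have h8 : (1:ℝ)/2 - eps n * n = eps n / 2 := by
          rw [eps]; field_simp; ring
        rw [distLat]
        linarith
      rw [stepApprox, if_neg (by push_neg; linarith)]
    · rw [stepApprox]
      split_ifs with h
      · apply phi_zero_outside hφ
        intro hOm
        exact hcen (by simpa using hOm j)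
      · rfl
  · rw [stepApprox]
    split_ifs with h
    · apply phi_zero_outside hφ
      intro hOm
      have := hOm j
      rw [update_of_ne hji] at this
      exact hj this
    · rfl

lemma vfun_vanish {n : ℕ} {r R : Fin 3 → ℝ} {φ : E3 → ℝ} (hRe : ∀ i, R i < eps n / 2)
    (hφ : TestFun φ) {x : E3} (hx : x ∉ Omg) : vfun n r R φ x = 0 := by
  rw [vfun]
  apply Finset.sum_eq_zero
  intro i _
  rw [phi_zero_outside hφ hx, step_zero_outside (hRe i) hφ hx i]
  ring

lemma vfun_lipschitz {n : ℕ} {r R : Fin 3 → ℝ} {φ : E3 → ℝ} (hr : ∀ i, 0 < r i)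
    (hrR : ∀ i, r i < R i) (hRe : ∀ i, R i < eps n / 2) (hφ : TestFun φ) :
    ∃ L : NNReal, LipschitzWith L (vfun n r R φ) := by
  obtain ⟨M, hM0, hM⟩ := testfun_bound hφ
  obtain ⟨hG0, _, hLip⟩ := testfun_grad hφ
  set K := 3 * gradSup φ with hKdef
  have hK : 0 ≤ K := by positivity
  set Creal := ∑ i : Fin 3, (3 * K + 2 * (M / R i)) with hCdef
  have hC : ∀ x y : E3, |vfun n r R φ x - vfun n r R φ y| ≤ Creal * dist x y := by
    intro x y
    rw [vfun, vfun, ← Finset.sum_sub_distrib]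
    calc |∑ i : Fin 3, (((1 - r i / R i) * φ x + (stepApprox n (R i) i φ x - φ x)
            * wfun n (r i) (R i) i x)
          - ((1 - r i / R i) * φ y + (stepApprox n (R i) i φ y - φ y) * wfun n (r i) (R i) i y))|
        ≤ ∑ i : Fin 3, |((1 - r i / R i) * φ x + (stepApprox n (R i) i φ x - φ x)
            * wfun n (r i) (R i) i x)
          - ((1 - r i / R i) * φ y + (stepApprox n (R i) i φ y - φ y)
            * wfun n (r i) (R i) i y)| := Finset.abs_sum_le_sum_abs _ _
      _ ≤ ∑ i : Fin 3, (3 * K + 2 * (M / R i)) * dist x y := by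
          apply Finset.sum_le_sum
          intro i _
          exact term_lip (hr i) (hrR i) (hRe i).le hM hK (fun z w => hLip z w) i x y
      _ = Creal * dist x y := by rw [hCdef, Finset.sum_mul]
  refine ⟨Real.toNNReal Creal, ?_⟩
  rw [lipschitzWith_iff_dist_le_mul]
  intro x y
  rw [Real.dist_eq]
  refine (hC x y).trans (mul_le_mul_of_nonneg_right ?_ dist_nonneg)
  rw [Real.coe_toNNReal']
  exact le_max_left _ _

lemma vgrad_bound {n : ℕ} {r R : Fin 3 → ℝ} {φ : E3 → ℝ} (hr : ∀ i, 0 < r i)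
    (hrR : ∀ i, r i < R i) (hφ : TestFun φ) (x : E3) (j : Fin 3) :
    |vgrad n r R φ x j| ≤ 18 * gradSup φ := by
  obtain ⟨hG0, hcomp, hLip⟩ := testfun_grad hφ
  rw [vgrad]
  have hterm : ∀ i : Fin 3, |(1 - r i / R i) * dphi φ x j
      + (stepGrad n (R i) i φ x j - dphi φ x j) * wfun n (r i) (R i) i x
      + (stepApprox n (R i) i φ x - φ x) * wgrad n (r i) (R i) i x j|
      ≤ 6 * gradSup φ := by
    intro i
    have hRi : 0 < R i := lt_trans (hr i) (hrR i)
    have b1 : |(1 - r i / R i) * dphi φ x j| ≤ gradSup φ := by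
      rw [abs_mul]
      have h1 : |1 - r i / R i| ≤ 1 := by
        rw [abs_le]
        refine ⟨?_, ?_⟩
        · have : r i / R i ≤ 1 := (div_le_one hRi).2 (hrR i).le
          linarith
        · have : 0 ≤ r i / R i := div_nonneg (hr i).le hRi.le
          linarith
      calc |1 - r i / R i| * |dphi φ x j| ≤ 1 * gradSup φ :=
            mul_le_mul h1 (hcomp x j) (abs_nonneg _) (by norm_num)
        _ = gradSup φ := one_mul _
    have b2 : |(stepGrad n (R i) i φ x j - dphi φ x j) * wfun n (r i) (R i) i x|
        ≤ 2 * gradSup φ := by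
      rw [abs_mul]
      have hsg : |stepGrad n (R i) i φ x j| ≤ gradSup φ := by
        rw [stepGrad]
        split_ifs with h
        · exact hcomp _ j
        · simpa using hG0
      have hw : |wfun n (r i) (R i) i x| ≤ 1 := by
        rw [abs_of_nonneg (wfun_nonneg _ _ _ _ _)]
        exact wfun_le_one (hr i).le hRi i x
      have hsd : |stepGrad n (R i) i φ x j - dphi φ x j| ≤ 2 * gradSup φ := by
        have h2 := hcomp x j
        have h3 := abs_sub (stepGrad n (R i) i φ x j) (dphi φ x j)
        rw [dphi] at *
        linarith
      calc |stepGrad n (R i) i φ x j - dphi φ x j| * |wfun n (r i) (R i) i x|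
          ≤ (2 * gradSup φ) * 1 := mul_le_mul hsd hw (abs_nonneg _) (by positivity)
        _ = 2 * gradSup φ := mul_one _
    have b3 : |(stepApprox n (R i) i φ x - φ x) * wgrad n (r i) (R i) i x j|
        ≤ 3 * gradSup φ := by
      rw [wgrad]
      split_ifs with h
      · obtain ⟨hji, hrd, hdR⟩ := h
        rw [stepApprox, if_pos hdR, abs_mul]
        have hstep : |φ (update x i (cen n (x i))) - φ x|
            ≤ 3 * gradSup φ * distLat n (x i) := by
          calc |φ (update x i (cen n (x i))) - φ x|
              ≤ 3 * gradSup φ * dist (update x i (cen n (x i))) x := hLip _ _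
            _ ≤ 3 * gradSup φ * |cen n (x i) - x i| :=
                mul_le_mul_of_nonneg_left (dist_update_self x i _) (by positivity)
            _ = 3 * gradSup φ * distLat n (x i) := by rw [distLat, abs_sub_comm]
        have hwg : |- Real.sign (x i - cen n (x i)) / R i| ≤ 1 / R i := by
          rw [abs_div, abs_neg, abs_of_pos hRi]
          gcongr
          rcases Real.sign_apply_eq (x i - cen n (x i)) with h' | h' | h' <;>
            rw [h'] <;> norm_num
        calc |φ (update x i (cen n (x i))) - φ x| * |- Real.sign (x i - cen n (x i)) / R i|
            ≤ (3 * gradSup φ * distLat n (x i)) * (1 / R i) := by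
              apply mul_le_mul hstep hwg (abs_nonneg _)
              exact mul_nonneg (by linarith) (distLat_nonneg n (x i))
          _ = 3 * gradSup φ * (distLat n (x i) / R i) := by ring
          _ ≤ 3 * gradSup φ * 1 :=
              mul_le_mul_of_nonneg_left ((div_le_one hRi).2 hdR.le) (by positivity)
          _ = 3 * gradSup φ := mul_one _
      · rw [mul_zero, abs_zero]
        positivity
    have habc := abs_add_le ((1 - r i / R i) * dphi φ x j
      + (stepGrad n (R i) i φ x j - dphi φ x j) * wfun n (r i) (R i) i x)
      ((stepApprox n (R i) i φ x - φ x) * wgrad n (r i) (R i) i x j)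
    have hab := abs_add_le ((1 - r i / R i) * dphi φ x j)
      ((stepGrad n (R i) i φ x j - dphi φ x j) * wfun n (r i) (R i) i x)
    linarith
  calc |∑ i : Fin 3, ((1 - r i / R i) * dphi φ x j
      + (stepGrad n (R i) i φ x j - dphi φ x j) * wfun n (r i) (R i) i x
      + (stepApprox n (R i) i φ x - φ x) * wgrad n (r i) (R i) i x j)|
      ≤ ∑ i : Fin 3, |(1 - r i / R i) * dphi φ x j
      + (stepGrad n (R i) i φ x j - dphi φ x j) * wfun n (r i) (R i) i x
      + (stepApprox n (R i) i φ x - φ x) * wgrad n (r i) (R i) i x j| :=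
        Finset.abs_sum_le_sum_abs _ _
    _ ≤ ∑ _i : Fin 3, 6 * gradSup φ := Finset.sum_le_sum (fun i _ => hterm i)
    _ = 18 * gradSup φ := by simp [Finset.sum_const]; ring

lemma isOpen_layer (n : ℕ) (r : ℝ) (i : Fin 3) : IsOpen (layer n r i) := by
  have hOmg : IsOpen Omg := by
    have : Omg = ⋂ i : Fin 3, (fun x : E3 => x i) ⁻¹' Set.Ioo (-(1/2) : ℝ) (1/2) := by
      ext x; simp [Omg, Set.mem_iInter]
    rw [this]
    exact isOpen_iInter_of_finite fun i =>
      (isOpen_Ioo).preimage (continuous_apply i)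
  have : layer n r i = Omg ∩ ⋃ k : ℤ,
      {x : E3 | |k| ≤ (n : ℤ) ∧ |x i - eps n * (k : ℝ)| < r} := by
    ext x
    simp only [layer, Set.mem_setOf_eq, Set.mem_inter_iff, Set.mem_iUnion]
  rw [this]
  apply hOmg.inter
  apply isOpen_iUnion
  intro k
  by_cases hk : |k| ≤ (n : ℤ)
  · have : {x : E3 | |k| ≤ (n : ℤ) ∧ |x i - eps n * (k : ℝ)| < r}
        = {x : E3 | |x i - eps n * (k : ℝ)| < r} := by
      ext x; simp [hk]
    rw [this]
    have hc : Continuous fun x : E3 => |x i - eps n * (k : ℝ)| :=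
      ((continuous_apply i).sub continuous_const).abs
    exact isOpen_lt hc continuous_const
  · have : {x : E3 | |k| ≤ (n : ℤ) ∧ |x i - eps n * (k : ℝ)| < r} = ∅ := by
      ext x; simp [hk]
    rw [this]; exact isOpen_empty

lemma layer_volume_le (n : ℕ) (r : ℝ) (i : Fin 3) :
    volume (layer n r i) ≤ ENNReal.ofReal ((2 * (n:ℝ) + 1) * (2 * r)) := by
  classical
  set S : ℤ → Set E3 := fun k =>
    Set.pi Set.univ (fun j => if j = i then Set.Ioo (eps n * k - r) (eps n * k + r)
      else Set.Ioo (-(1/2) : ℝ) (1/2)) with hS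
  have hsub : layer n r i ⊆ ⋃ k ∈ Finset.Icc (-(n:ℤ)) (n:ℤ), S k := by
    rintro x ⟨hx, k, hk, hxk⟩
    rw [Set.mem_iUnion]
    refine ⟨k, ?_⟩
    rw [Set.mem_iUnion]
    refine ⟨by rw [Finset.mem_Icc]; exact abs_le.1 hk, ?_⟩
    rw [hS, Set.mem_pi]
    intro j _
    by_cases hj : j = i
    · subst hj
      rw [if_pos rfl]
      rw [abs_lt] at hxk
      exact ⟨by linarith [hxk.1], by linarith [hxk.2]⟩
    · rw [if_neg hj]
      exact hx j
  have hSvol : ∀ k : ℤ, volume (S k) = ENNReal.ofReal (2 * r) := by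
    intro k
    rw [hS, volume_pi_pi]
    have : ∀ j : Fin 3, volume (if j = i then Set.Ioo (eps n * k - r) (eps n * k + r)
        else Set.Ioo (-(1/2) : ℝ) (1/2))
        = if j = i then ENNReal.ofReal (2 * r) else 1 := by
      intro j
      by_cases hj : j = i
      · rw [if_pos hj, if_pos hj, Real.volume_Ioo]
        congr 1; ring
      · rw [if_neg hj, if_neg hj, Real.volume_Ioo]
        norm_num
    simp only [this]
    rw [Finset.prod_ite_eq' Finset.univ i (fun _ => ENNReal.ofReal (2 * r))]
    simp
  calc volume (layer n r i) ≤ volume (⋃ k ∈ Finset.Icc (-(n:ℤ)) (n:ℤ), S k) :=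
        measure_mono hsub
    _ ≤ ∑ k ∈ Finset.Icc (-(n:ℤ)) (n:ℤ), volume (S k) := measure_biUnion_finset_le _ _
    _ = (Finset.Icc (-(n:ℤ)) (n:ℤ)).card • ENNReal.ofReal (2 * r) := by
        rw [Finset.sum_congr rfl (fun k _ => hSvol k), Finset.sum_const]
    _ = ENNReal.ofReal ((2 * (n:ℝ) + 1) * (2 * r)) := by
        rw [Int.card_Icc]
        have hcard : ((n:ℤ) + 1 - -(n:ℤ)).toNat = 2 * n + 1 := by omega
        rw [hcard, nsmul_eq_mul, ← ENNReal.ofReal_natCast,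
          ← ENNReal.ofReal_mul (by positivity)]
        congr 1
        push_cast
        ring

lemma Cset_volume_le (n : ℕ) {R : Fin 3 → ℝ} (hR : ∀ i, 0 ≤ R i) :
    volume (Cset n R) ≤ ENNReal.ofReal (∑ i : Fin 3, (2 * (n:ℝ) + 1) * (2 * R i)) := by
  calc volume (Cset n R) ≤ ∑' i : Fin 3, volume (layer n (R i) i) := measure_iUnion_le _
    _ = ∑ i : Fin 3, volume (layer n (R i) i) := tsum_fintype _
    _ ≤ ∑ i : Fin 3, ENNReal.ofReal ((2 * (n:ℝ) + 1) * (2 * R i)) :=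
        Finset.sum_le_sum (fun i _ => layer_volume_le n (R i) i)
    _ = ENNReal.ofReal (∑ i : Fin 3, (2 * (n:ℝ) + 1) * (2 * R i)) := by
        rw [ENNReal.ofReal_sum_of_nonneg]
        intro i _
        have := hR i
        positivity

lemma sqrt_add_le2 {u v : ℝ} (hu : 0 ≤ u) (hv : 0 ≤ v) :
    Real.sqrt (u + v) ≤ Real.sqrt u + Real.sqrt v := by
  rw [show Real.sqrt u + Real.sqrt v = Real.sqrt ((Real.sqrt u + Real.sqrt v)^2) from
    (Real.sqrt_sq (by positivity)).symm]
  apply Real.sqrt_le_sqrt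
  nlinarith [Real.sq_sqrt hu, Real.sq_sqrt hv, Real.sqrt_nonneg u, Real.sqrt_nonneg v]

lemma sqrt_add_le3 {a b c : ℝ} (ha : 0 ≤ a) (hb : 0 ≤ b) (hc : 0 ≤ c) :
    Real.sqrt (a + b + c) ≤ Real.sqrt a + Real.sqrt b + Real.sqrt c := by
  calc Real.sqrt (a + b + c) ≤ Real.sqrt (a + b) + Real.sqrt c :=
        sqrt_add_le2 (by linarith) hc
    _ ≤ Real.sqrt a + Real.sqrt b + Real.sqrt c := by linarith [sqrt_add_le2 ha hb]

lemma main_bound {n : ℕ} {r R : Fin 3 → ℝ} {φ : E3 → ℝ} (hr : ∀ i, 0 < r i)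
    (hrR : ∀ i, r i < R i) (hφ : TestFun φ) :
    Real.sqrt (∫ x in Cset n R, ∑ j, (vgrad n r R φ x j)^2)
      ≤ 45 * gradSup φ * ∑ i, Real.sqrt (R i / eps n) := by
  obtain ⟨hG0, -, -⟩ := testfun_grad hφ
  have he := eps_pos n
  have hR0 : ∀ i, 0 ≤ R i := fun i => (lt_trans (hr i) (hrR i)).le
  have hCm : MeasurableSet (Cset n R) :=
    (isOpen_iUnion fun i => isOpen_layer n (R i) i).measurableSet
  have hCle := Cset_volume_le n hR0
  have hClt : volume (Cset n R) < ⊤ := lt_of_le_of_lt hCle ENNReal.ofReal_lt_top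
  have hptw : ∀ x, x ∈ Cset n R → ‖∑ j, (vgrad n r R φ x j)^2‖ ≤ 972 * (gradSup φ)^2 := by
    intro x _
    rw [Real.norm_eq_abs, abs_of_nonneg (Finset.sum_nonneg fun j _ => sq_nonneg _)]
    have hsq : ∀ j : Fin 3, (vgrad n r R φ x j)^2 ≤ (18 * gradSup φ)^2 := by
      intro j
      have h := vgrad_bound (n := n) hr hrR hφ x j
      nlinarith [abs_nonneg (vgrad n r R φ x j), sq_abs (vgrad n r R φ x j)]
    calc ∑ j : Fin 3, (vgrad n r R φ x j)^2 ≤ ∑ _j : Fin 3, (18 * gradSup φ)^2 :=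
          Finset.sum_le_sum (fun j _ => hsq j)
      _ = 972 * (gradSup φ)^2 := by simp [Finset.sum_const]; ring
  have hnorm := norm_setIntegral_le_of_norm_le_const_ae' hClt (ae_of_all _ hptw)
  have hint : (∫ x in Cset n R, ∑ j, (vgrad n r R φ x j)^2)
      ≤ 972 * (gradSup φ)^2 * (volume (Cset n R)).toReal := by
    refine le_trans (le_abs_self _) ?_
    rw [← Real.norm_eq_abs]
    exact hnorm
  have hsum0 : (0:ℝ) ≤ ∑ i : Fin 3, (2 * (n:ℝ) + 1) * (2 * R i) := by
    apply Finset.sum_nonneg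
    intro i _
    have := hR0 i
    positivity
  have htoReal : (volume (Cset n R)).toReal ≤ ∑ i : Fin 3, (2 * (n:ℝ) + 1) * (2 * R i) :=
    ENNReal.toReal_le_of_le_ofReal hsum0 hCle
  have hconv : ∀ i : Fin 3, (2 * (n:ℝ) + 1) * (2 * R i) = 2 * (R i / eps n) := by
    intro i
    rw [eps]
    field_simp
  set D := ∑ i : Fin 3, (R i / eps n) with hD
  have hD0 : ∀ i : Fin 3, 0 ≤ R i / eps n := fun i => div_nonneg (hR0 i) he.le
  have hDsum : ∑ i : Fin 3, (2 * (n:ℝ) + 1) * (2 * R i) = 2 * D := by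
    rw [hD, Finset.mul_sum]
    exact Finset.sum_congr rfl fun i _ => hconv i
  have hint2 : (∫ x in Cset n R, ∑ j, (vgrad n r R φ x j)^2)
      ≤ 1944 * (gradSup φ)^2 * D := by
    have h2 := mul_le_mul_of_nonneg_left (htoReal.trans_eq hDsum) (by positivity :
      (0:ℝ) ≤ 972 * (gradSup φ)^2)
    calc (∫ x in Cset n R, ∑ j, (vgrad n r R φ x j)^2)
        ≤ 972 * (gradSup φ)^2 * (volume (Cset n R)).toReal := hint
      _ ≤ 972 * (gradSup φ)^2 * (2 * D) := h2
      _ = 1944 * (gradSup φ)^2 * D := by ring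
  have hDnn : 0 ≤ D := Finset.sum_nonneg fun i _ => hD0 i
  have hsqrtD : Real.sqrt D ≤ ∑ i, Real.sqrt (R i / eps n) := by
    rw [hD, Fin.sum_univ_three, Fin.sum_univ_three]
    exact sqrt_add_le3 (hD0 0) (hD0 1) (hD0 2)
  have hsqrt1944 : Real.sqrt 1944 ≤ 45 := by
    rw [show (45:ℝ) = Real.sqrt 2025 from by
      rw [show (2025:ℝ) = 45^2 from by norm_num, Real.sqrt_sq (by norm_num : (0:ℝ) ≤ 45)]]
    exact Real.sqrt_le_sqrt (by norm_num)
  calc Real.sqrt (∫ x in Cset n R, ∑ j, (vgrad n r R φ x j)^2)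
      ≤ Real.sqrt (1944 * (gradSup φ)^2 * D) := Real.sqrt_le_sqrt hint2
    _ = Real.sqrt 1944 * Real.sqrt ((gradSup φ)^2) * Real.sqrt D := by
        rw [Real.sqrt_mul (by positivity), Real.sqrt_mul (by norm_num)]
    _ = Real.sqrt 1944 * gradSup φ * Real.sqrt D := by rw [Real.sqrt_sq hG0]
    _ ≤ 45 * gradSup φ * ∑ i, Real.sqrt (R i / eps n) := by
        apply mul_le_mul
        · exact mul_le_mul_of_nonneg_right hsqrt1944 hG0
        · exact hsqrtD
        · exact Real.sqrt_nonneg _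
        · positivity

/-- (36) and (43): the control-zone test function
`v_ε(φ) = Σ_i [(1 − r^i_ε/R^i_ε)φ + (φ^i_ε − φ)w^i_ε]` belongs to
`W^{1,∞}_0(Ω)` (it is Lipschitz and vanishes outside Ω) and satisfies
`‖∇v_ε(φ)‖_{L²(C_ε)} ≤ C ‖∇φ‖_{L^∞(Ω)} Σ_i (R^i_ε/ε)^{1/2} → 0`. -/
theorem statement16 (r R : ℕ → Fin 3 → ℝ)
    (hr : ∀ n i, 0 < r n i) (hrR : ∀ n i, r n i < R n i)
    (hRs : ∀ n i, R n i < eps n / 2)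
    (hrRe : ∀ i, Tendsto (fun n => r n i / R n i) atTop (𝓝 0))
    (hRe : ∀ i, Tendsto (fun n => R n i / eps n) atTop (𝓝 0))
    (φ : E3 → ℝ) (hφ : TestFun φ) :
    (∀ n, (∃ L : NNReal, LipschitzWith L (vfun n (r n) (R n) φ)) ∧
      ∀ x, x ∉ Omg → vfun n (r n) (R n) φ x = 0) ∧
    (∃ C : ℝ, 0 < C ∧ ∀ n,
      Real.sqrt (∫ x in Cset n (R n), ∑ j, (vgrad n (r n) (R n) φ x j)^2)
        ≤ C * gradSup φ * ∑ i, Real.sqrt (R n i / eps n)) ∧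
    Tendsto (fun n =>
      Real.sqrt (∫ x in Cset n (R n), ∑ j, (vgrad n (r n) (R n) φ x j)^2))
      atTop (𝓝 0) := by
  refine ⟨?_, ?_, ?_⟩
  · intro n
    exact ⟨vfun_lipschitz (hr n) (hrR n) (hRs n) hφ,
      fun x hx => vfun_vanish (hRs n) hφ hx⟩
  · exact ⟨45, by norm_num, fun n => main_bound (hr n) (hrR n) hφ⟩
  · apply squeeze_zero (fun n => Real.sqrt_nonneg _)
      (fun n => main_bound (hr n) (hrR n) hφ)
    have hi : ∀ i : Fin 3, Tendsto (fun n => Real.sqrt (R n i / eps n)) atTop (𝓝 0) := by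
      intro i
      have h := (Real.continuous_sqrt.tendsto 0).comp (hRe i)
      simpa [Function.comp_def] using h
    have hsum : Tendsto (fun n => ∑ i, Real.sqrt (R n i / eps n)) atTop (𝓝 0) := by
      have h3 := ((hi 0).add (hi 1)).add (hi 2)
      norm_num at h3
      simpa [Fin.sum_univ_three] using h3
    have hfin := hsum.const_mul (45 * gradSup φ)
    simpa [mul_assoc] using hfin
end
end
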